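/- arXiv:0705.2165 — 8 statements merged into one kernel-verified Lean document; each statement's English description precedes it below -/
import Mathlib

section
/- Let A ∈ (0,1) and B > 0. There exist constants R = R(A,B), r = r(A,B) ∈ (0,1) such that for every holomorphic function f : 𝔻 → ℂ on the open unit disc satisfying f(0) = 0, sup_{z∈𝔻} |f(z)| ≤ B, and A < |f'(0)| < A⁻¹, there exists an open set U_f containing the disc D(0,r) such that f restricted to U_f is a biholomorphism onto D(0,R). -/
open Metric Set Filter Topology NNReal ContinuousLinearMap

/-!
By the Cauchy estimates, a holomorphic function bounded by `B` on the unit disc has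
`|f'(z) - f'(0)| ≤ 16 B |z|` on `D(0, 1/2)`. Hence on a disc of radius `ρ` depending only on
`A` and `B`, `f` is within `A/2` (in the sense of `ApproximatesLinearOn`) of the linear map
`z ↦ f'(0) z`, whose dilation factor `|f'(0)|` lies in `(A, A⁻¹)`. Such a map is bi-Lipschitz
on the disc and, by the quantitative surjectivity of `ApproximatesLinearOn`, covers a disc
`D(0, R)` with `R` controlled by `A` and `ρ`; the inverse is holomorphic because `f'` does not
vanish there.
-/

section CauchyEstimates

variable {f : ℂ → ℂ} {B : ℝ}

theorem norm_deriv_le_of_ball_subset {s : Set ℂ} (hf : DifferentiableOn ℂ f s)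
    (hB : ∀ z ∈ s, ‖f z‖ ≤ B) {z : ℂ} {ε : ℝ} (hε : 0 < ε) (hzs : ball z ε ⊆ s) :
    ‖deriv f z‖ ≤ 2 * B / ε := by
  have hz : z ∈ s := hzs (mem_ball_self hε)
  have hmaps : MapsTo f (ball z ε) (closedBall (f z) (2 * B)) := fun w hw => by
    rw [mem_closedBall, dist_eq_norm]
    linarith [norm_sub_le (f w) (f z), hB w (hzs hw), hB z hz]
  exact Complex.norm_deriv_le_div_of_mapsTo_ball (hf.mono hzs) hmaps hε

theorem dist_deriv_le_of_norm_le {c z : ℂ} {R : ℝ} (hf : DifferentiableOn ℂ f (ball c R))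
    (hB : ∀ w ∈ ball c R, ‖f w‖ ≤ B) (hz : z ∈ ball c (R / 2)) :
    dist (deriv f z) (deriv f c) ≤ 16 * B / R ^ 2 * dist z c := by
  have hR : 0 < R / 2 := pos_of_mem_ball hz
  have hderiv : ∀ w ∈ ball c (R / 2), ‖deriv f w‖ ≤ 4 * B / R := fun w hw => by
    have hsub : ball w (R / 2) ⊆ ball c R :=
      ball_subset_ball' (by linarith [mem_ball.1 hw])
    exact (norm_deriv_le_of_ball_subset hf hB hR hsub).trans_eq (by ring)
  have hmaps : MapsTo (deriv f) (ball c (R / 2)) (closedBall (deriv f c) (8 * B / R)) :=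
    fun w hw => by
      rw [mem_closedBall, dist_eq_norm]
      linarith [norm_sub_le (deriv f w) (deriv f c), hderiv w hw,
        hderiv c (mem_ball_self hR), show 8 * B / R = 4 * B / R + 4 * B / R by ring]
  have hdf : DifferentiableOn ℂ (deriv f) (ball c (R / 2)) :=
    (hf.analyticOnNhd isOpen_ball).deriv.differentiableOn.mono (ball_subset_ball (by linarith))
  calc dist (deriv f z) (deriv f c) ≤ 8 * B / R / (R / 2) * dist z c :=
        Complex.dist_le_div_mul_dist_of_mapsTo_ball hdf hmaps hz
    _ = 16 * B / R ^ 2 * dist z c := by field_simp; ring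

end CauchyEstimates

section LinearApproximation

variable {f : ℂ → ℂ} {s : Set ℂ} {a : ℂ} {c : ℝ≥0}

theorem approximatesLinearOn_toSpanSingleton (hs : Convex ℝ s)
    (hf : ∀ z ∈ s, DifferentiableAt ℂ f z) (hc : ∀ z ∈ s, ‖deriv f z - a‖ ≤ c) :
    ApproximatesLinearOn f (toSpanSingleton ℂ a) s c := by
  intro x hx y hy
  have hg : ∀ z ∈ s, HasDerivWithinAt (fun w => f w - w * a) (deriv f z - a) s z := fun z hz =>
    ((hf z hz).hasDerivAt.sub (hasDerivAt_mul_const a)).hasDerivWithinAt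
  rw [toSpanSingleton_apply, smul_eq_mul]
  calc ‖f x - f y - (x - y) * a‖ = ‖(f x - x * a) - (f y - y * a)‖ := by ring_nf
    _ ≤ c * ‖x - y‖ := hs.norm_image_sub_le_of_norm_hasDerivWithin_le hg hc hy hx

noncomputable def toSpanSingletonNonlinearRightInverse (ha : a ≠ 0) :
    (toSpanSingleton ℂ a).NonlinearRightInverse where
  toFun y := y / a
  nnnorm := ‖a‖₊⁻¹
  bound' y := by simp [div_eq_inv_mul]
  right_inv' y := by simp [ha]

namespace ApproximatesLinearOn

theorem norm_image_sub_le (hf : ApproximatesLinearOn f (toSpanSingleton ℂ a) s c) {x y : ℂ}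
    (hx : x ∈ s) (hy : y ∈ s) :
    ‖f x - f y‖ ≤ (‖a‖ + c) * ‖x - y‖ := by
  have := hf x hx y hy
  rw [toSpanSingleton_apply, smul_eq_mul] at this
  calc ‖f x - f y‖ ≤ ‖f x - f y - (x - y) * a‖ + ‖(x - y) * a‖ := norm_le_norm_sub_add _ _
    _ ≤ (‖a‖ + c) * ‖x - y‖ := by rw [norm_mul]; linarith

theorem le_norm_image_sub (hf : ApproximatesLinearOn f (toSpanSingleton ℂ a) s c) {x y : ℂ}
    (hx : x ∈ s) (hy : y ∈ s) :
    (‖a‖ - c) * ‖x - y‖ ≤ ‖f x - f y‖ := by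
  have := hf x hx y hy
  rw [toSpanSingleton_apply, smul_eq_mul] at this
  have h := norm_sub_norm_le ((x - y) * a) ((x - y) * a - (f x - f y))
  rw [sub_sub_cancel, norm_sub_rev, norm_mul] at h
  linarith

theorem surjOn_closedBall_toSpanSingleton
    (hf : ApproximatesLinearOn f (toSpanSingleton ℂ a) s c) (ha : a ≠ 0) {b : ℂ} {ε : ℝ}
    (hε : 0 ≤ ε) (hεs : closedBall b ε ⊆ s) :
    SurjOn f (closedBall b ε) (closedBall (f b) ((‖a‖ - c) * ε)) := by
  simpa [toSpanSingletonNonlinearRightInverse] using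
    hf.surjOn_closedBall_of_nonlinearRightInverse (toSpanSingletonNonlinearRightInverse ha) hε hεs

end ApproximatesLinearOn

end LinearApproximation

theorem Set.InvOn.differentiableOn_of_deriv_ne_zero {f g : ℂ → ℂ} {U V : Set ℂ} (hU : IsOpen U)
    (hf : DifferentiableOn ℂ f U) (hf' : ∀ z ∈ U, deriv f z ≠ 0) (hinv : InvOn g f U V)
    (hg : MapsTo g V U) : DifferentiableOn ℂ g V := by
  intro w hw
  have hgw : g w ∈ U := hg hw
  have hleft : ∀ᶠ z in 𝓝 (g w), g (f z) = z :=
    eventually_of_mem (hU.mem_nhds hgw) fun z hz => hinv.1 hz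
  have hstrict := (hf.analyticAt (hU.mem_nhds hgw)).hasStrictDerivAt.to_local_left_inverse
    (hf' _ hgw) hleft
  rw [hinv.2 hw] at hstrict
  exact hstrict.hasDerivAt.differentiableAt.differentiableWithinAt

theorem exists_invOn_ball_of_norm_deriv_sub_le {f : ℂ → ℂ} {a : ℂ} {c : ℝ≥0} {ρ R r : ℝ}
    (hf : ∀ z ∈ closedBall (0 : ℂ) ρ, DifferentiableAt ℂ f z) (hf0 : f 0 = 0)
    (hca : c < ‖a‖) (hderiv : ∀ z ∈ closedBall (0 : ℂ) ρ, ‖deriv f z - a‖ ≤ c) (hρ : 0 ≤ ρ)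
    (hR : R ≤ (‖a‖ - c) * ρ) (hr : (‖a‖ + c) * r ≤ R) :
    ∃ U : Set ℂ, IsOpen U ∧ ball 0 r ⊆ U ∧ U ⊆ ball 0 ρ ∧ BijOn f U (ball 0 R) ∧
      ∃ g : ℂ → ℂ, DifferentiableOn ℂ g (ball 0 R) ∧
        (∀ z ∈ U, g (f z) = z) ∧ ∀ w ∈ ball 0 R, f (g w) = w := by
  have ha : a ≠ 0 := norm_pos_iff.1 (c.coe_nonneg.trans_lt hca)
  have happrox := approximatesLinearOn_toSpanSingleton (convex_closedBall 0 ρ) hf hderiv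
  have h0 : (0 : ℂ) ∈ closedBall 0 ρ := mem_closedBall_self hρ
  have hlower : ∀ z ∈ closedBall (0 : ℂ) ρ, (‖a‖ - c) * ‖z‖ ≤ ‖f z‖ := fun z hz => by
    simpa [hf0] using happrox.le_norm_image_sub hz h0
  have hupper : ∀ z ∈ closedBall (0 : ℂ) ρ, ‖f z‖ ≤ (‖a‖ + c) * ‖z‖ := fun z hz => by
    simpa [hf0] using happrox.norm_image_sub_le hz h0
  set U := ball 0 ρ ∩ f ⁻¹' ball 0 R
  have hUopen : IsOpen U :=
    ContinuousOn.isOpen_inter_preimage (fun z hz =>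
      (hf z (ball_subset_closedBall hz)).continuousAt.continuousWithinAt) isOpen_ball isOpen_ball
  have hrU : ball 0 r ⊆ U := fun z hz => by
    rw [mem_ball_zero_iff] at hz
    have hzρ : ‖z‖ < ρ := by nlinarith [norm_nonneg z]
    refine ⟨mem_ball_zero_iff.2 hzρ, mem_ball_zero_iff.2 ?_⟩
    calc ‖f z‖ ≤ (‖a‖ + c) * ‖z‖ := hupper z (mem_closedBall_zero_iff.2 hzρ.le)
      _ < (‖a‖ + c) * r := by gcongr
      _ ≤ R := hr
  have hinj : InjOn f U := fun x hx y hy hxy => by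
    have := happrox.le_norm_image_sub (ball_subset_closedBall hx.1) (ball_subset_closedBall hy.1)
    rw [hxy, sub_self, norm_zero] at this
    exact sub_eq_zero.1 (norm_le_zero_iff.1 (nonpos_of_mul_nonpos_right this (by linarith)))
  have hsurj : SurjOn f U (ball 0 R) := fun w hw => by
    rw [mem_ball_zero_iff] at hw
    obtain ⟨z, hz, rfl⟩ := happrox.surjOn_closedBall_toSpanSingleton ha hρ subset_rfl
      (by rw [hf0, mem_closedBall_zero_iff]; linarith)
    have hzρ : ‖z‖ < ρ := by nlinarith [hlower z hz]
    exact ⟨z, ⟨mem_ball_zero_iff.2 hzρ, mem_ball_zero_iff.2 hw⟩, rfl⟩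
  have hbij : BijOn f U (ball 0 R) := ⟨fun z hz => hz.2, hinj, hsurj⟩
  have hinv := hbij.invOn_invFunOn
  refine ⟨U, hUopen, hrU, inter_subset_left, hbij, Function.invFunOn f U,
    hinv.differentiableOn_of_deriv_ne_zero hUopen ?_ ?_ hsurj.mapsTo_invFunOn,
    fun z hz => hinv.1 hz, fun w hw => hinv.2 hw⟩
  · exact fun z hz => (hf z (ball_subset_closedBall hz.1)).differentiableWithinAt
  · intro z hz hz0
    have := hderiv z (ball_subset_closedBall hz.1)
    rw [hz0, zero_sub, norm_neg] at this
    exact this.not_gt hca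

/-- **Inverse-function lemma with uniform radii.**
For any constants `A ∈ (0,1)` and `B > 0` there exist radii `R, r ∈ (0,1)` such that every
holomorphic function `f` on the unit disc with `f 0 = 0`, `sup norm ≤ B` and
`A < |f'(0)| < A⁻¹` is a biholomorphism from some open set `U_f ⊇ D(0,r)` onto `D(0,R)`. -/
theorem uniform_inversion_lemma (A B : ℝ) (hA : A ∈ Ioo (0:ℝ) 1) (hB : 0 < B) :
    ∃ R ∈ Ioo (0:ℝ) 1, ∃ r ∈ Ioo (0:ℝ) 1,
      ∀ f : ℂ → ℂ, DifferentiableOn ℂ f (ball 0 1) → f 0 = 0 →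
        (∀ z ∈ ball (0:ℂ) 1, ‖f z‖ ≤ B) →
        A < ‖deriv f 0‖ → ‖deriv f 0‖ < A⁻¹ →
        ∃ U : Set ℂ, IsOpen U ∧ ball (0:ℂ) r ⊆ U ∧ U ⊆ ball (0:ℂ) 1 ∧
          Set.BijOn f U (ball (0:ℂ) R) ∧
          ∃ g : ℂ → ℂ, DifferentiableOn ℂ g (ball (0:ℂ) R) ∧
            (∀ z ∈ U, g (f z) = z) ∧ (∀ w ∈ ball (0:ℂ) R, f (g w) = w) := by
  obtain ⟨hA0, hA1⟩ := hA
  set ρ := A / (32 * B + 4)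
  have hρ0 : 0 < ρ := by positivity
  have hρA : (32 * B + 4) * ρ = A := mul_div_cancel₀ A (by positivity)
  have hρ : ρ < 1 / 4 := by nlinarith [mul_pos hB hρ0]
  have hBρ : 16 * B * ρ ≤ A / 2 := by linarith
  have hAρ : A * ρ < 1 := by nlinarith
  refine ⟨A * ρ / 2, ⟨by positivity, by linarith⟩, A * (A * ρ / 2) / 2,
    ⟨by positivity, by nlinarith⟩, fun f hf hf0 hfB hfA hfA' => ?_⟩
  let c : ℝ≥0 := ⟨A / 2, by positivity⟩
  have hc : (c : ℝ) = A / 2 := rfl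
  have hderiv : ∀ z ∈ closedBall (0 : ℂ) ρ, ‖deriv f z - deriv f 0‖ ≤ c := fun z hz => by
    have hz' := mem_closedBall_zero_iff.1 hz
    have := dist_deriv_le_of_norm_le (z := z) hf hfB (mem_ball_zero_iff.2 (by linarith))
    rw [dist_eq_norm, dist_zero_right] at this
    rw [hc]
    nlinarith [norm_nonneg z]
  have hfA'' : ‖deriv f 0‖ * A < 1 := by
    simpa [hA0.ne'] using mul_lt_mul_of_pos_right hfA' hA0
  obtain ⟨U, hU, hrU, hUρ, hbij, hg⟩ := exists_invOn_ball_of_norm_deriv_sub_le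
    (R := A * ρ / 2) (r := A * (A * ρ / 2) / 2)
    (fun z hz => hf.differentiableAt <|
      isOpen_ball.mem_nhds (closedBall_subset_ball (by linarith) hz))
    hf0 (by rw [hc]; linarith) hderiv hρ0.le (by rw [hc]; nlinarith)
    (by rw [hc]; nlinarith [mul_pos (mul_pos hA0 hρ0) (sub_pos.2 hfA''),
      mul_pos (mul_pos hA0 hρ0) (mul_pos hA0 (sub_pos.2 hA1))])
  exact ⟨U, hU, hrU, hUρ.trans (ball_subset_ball (by linarith)), hbij, hg⟩
end

section
/- Let α ∈ 𝕋^d be rationally independent and let g : 𝕋^d → ℝ be continuous. Suppose there exist a point θ̃ ∈ 𝕋^d and constants B₋ < 0 < B₊ such that the Birkhoff sums S^n(θ̃) = Σ_{i=0}^{n-1} g(θ̃ + iα) satisfy B₋ < S^n(θ̃) < B₊ for all n ≥ 0. Then there exists a continuous function h : 𝕋^d → ℝ solving the cohomological equation h(θ + α) − h(θ) = g(θ) for all θ ∈ 𝕋^d. -/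
/-!
Consider the skew product `T (x, t) = (x + α, t + g x)` on `𝕋^d × ℝ`. The `T`-orbit of `(θ̃, 0)` is
bounded, so its closure is compact and invariant and contains a minimal nonempty compact invariant
set `M`. The projection of `M` to the torus is closed and invariant under the rotation, hence is
everything. Vertical translations commute with `T`, so if `M` met some fibre twice it would be
invariant under a nonzero vertical translation, which a compact set cannot be. Thus `M` is the graph
of a function `h`, continuous since `M` is compact, and invariance of the graph under `T` is the
equation `h (θ + α) = h θ + g θ`.
-/

open Filter Topology

instance : Fact ((0:ℝ) < 1) := ⟨one_pos⟩

/-- The `d`-dimensional torus `𝕋^d = ℝ^d/ℤ^d`. -/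
abbrev Torus (d : ℕ) := Fin d → AddCircle (1:ℝ)

/-- `α` is rationally independent iff the rotation `θ ↦ θ + α` is minimal,
i.e. every (forward) orbit is dense. -/
def RatIndep {d : ℕ} (α : Torus d) : Prop :=
  ∀ θ : Torus d, Dense (Set.range fun n : ℕ => θ + n • α)

open Set Function

section CompactInvariant

variable {Y : Type*} [TopologicalSpace Y]

structure IsCompactInvariant (T : Y → Y) (A : Set Y) : Prop where
  nonempty : A.Nonempty
  isCompact : IsCompact A
  mapsTo : MapsTo T A A

/-- Zorn's lemma: a chain is bounded below by its intersection, which is nonempty by Cantor's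
intersection theorem. -/
theorem IsCompactInvariant.exists_minimal_subset [T2Space Y] {T : Y → Y} {K : Set Y}
    (hK : IsCompactInvariant T K) : ∃ M ⊆ K, Minimal (IsCompactInvariant T) M := by
  refine zorn_superset_nonempty {A | IsCompactInvariant T A} ?_ K hK
  intro c hc hchain ⟨A₀, hA₀⟩
  have : Nonempty c := ⟨⟨A₀, hA₀⟩⟩
  refine ⟨⋂₀ c, ⟨?_, ?_, ?_⟩, fun A hA => sInter_subset_of_mem hA⟩
  · exact IsCompact.nonempty_sInter_of_directed_nonempty_isCompact_isClosed
      (fun A hA B hB => (hchain.total hA hB).elim (fun h => ⟨A, hA, subset_rfl, h⟩)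
        (fun h => ⟨B, hB, h, subset_rfl⟩))
      (fun A hA => (hc hA).nonempty) (fun A hA => (hc hA).isCompact)
      (fun A hA => (hc hA).isCompact.isClosed)
  · exact (hc hA₀).isCompact.of_isClosed_subset
      (isClosed_sInter fun A hA => (hc hA).isCompact.isClosed) (sInter_subset_of_mem hA₀)
  · exact fun y hy A hA => (hc hA).mapsTo (hy A hA)

end CompactInvariant

theorem eq_univ_of_mapsTo_of_dense_orbit {X : Type*} [TopologicalSpace X] {f : X → X}
    (hf : ∀ x, Dense (range fun n : ℕ => f^[n] x)) {A : Set X} (hA : IsClosed A)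
    (hne : A.Nonempty) (hfA : MapsTo f A A) : A = univ := by
  obtain ⟨x, hx⟩ := hne
  have horbit : range (fun n : ℕ => f^[n] x) ⊆ A := range_subset_iff.2 fun n => hfA.iterate n hx
  exact eq_univ_of_univ_subset <| (hf x).closure_eq ▸ closure_minimal horbit hA

/-- The projection from `M` is a continuous bijection from a compact space onto a Hausdorff one,
hence a homeomorphism. -/
theorem IsCompact.exists_continuous_of_existsUnique {X Y : Type*} [TopologicalSpace X]
    [T2Space X] [TopologicalSpace Y] {M : Set (X × Y)} (hM : IsCompact M)
    (hfiber : ∀ x, ∃! y, (x, y) ∈ M) : ∃ h : X → Y, Continuous h ∧ ∀ x, (x, h x) ∈ M := by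
  have : CompactSpace M := isCompact_iff_compactSpace.mp hM
  have hbij : Bijective fun p : M => p.1.1 := by
    refine ⟨fun p q hpq => Subtype.ext (Prod.ext hpq ?_), fun x => ?_⟩
    · have hq : (p.1.1, q.1.2) ∈ M := by rw [show p.1.1 = q.1.1 from hpq]; exact q.2
      exact (hfiber p.1.1).unique p.2 hq
    · obtain ⟨y, hy, -⟩ := hfiber x
      exact ⟨⟨(x, y), hy⟩, rfl⟩
  let e : M ≃ₜ X := (continuous_fst.comp continuous_subtype_val).homeoOfEquivCompactToT2
    (f := Equiv.ofBijective _ hbij)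
  refine ⟨fun x => (e.symm x).1.2, by fun_prop, fun x => ?_⟩
  have hx : (e.symm x).1 = (x, (e.symm x).1.2) := Prod.ext (e.apply_symm_apply x) rfl
  exact hx ▸ (e.symm x).2

theorem eq_zero_of_mapsTo_vertical_translation {Y : Type*} [TopologicalSpace Y] {A : Set (Y × ℝ)}
    (hA : IsCompact A) (hne : A.Nonempty) {c : ℝ} (hc : MapsTo (fun p => (p.1, p.2 + c)) A A) :
    c = 0 := by
  obtain ⟨p, hp, hmax⟩ := hA.exists_isMaxOn hne continuous_snd.continuousOn
  obtain ⟨q, hq, hmin⟩ := hA.exists_isMinOn hne continuous_snd.continuousOn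
  have h₁ : p.2 + c ≤ p.2 := hmax (hc hp)
  have h₂ : q.2 ≤ q.2 + c := hmin (hc hq)
  linarith

section SkewProduct

variable {X : Type*} {f : X → X} {g : X → ℝ}

def skewProduct (f : X → X) (g : X → ℝ) (p : X × ℝ) : X × ℝ := (f p.1, p.2 + g p.1)

theorem skewProduct_iterate (n : ℕ) (x : X) (t : ℝ) :
    (skewProduct f g)^[n] (x, t) = (f^[n] x, t + birkhoffSum f g n x) := by
  induction n with
  | zero => simp
  | succ n ih =>
    rw [iterate_succ_apply', ih, birkhoffSum_succ, iterate_succ_apply', skewProduct, add_assoc]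

variable [TopologicalSpace X]

theorem continuous_skewProduct (hf : Continuous f) (hg : Continuous g) :
    Continuous (skewProduct f g) := by
  unfold skewProduct; fun_prop

theorem isCompactInvariant_closure_orbit_skewProduct [CompactSpace X] [T2Space X]
    (hf : Continuous f) (hg : Continuous g) (x₀ : X)
    (hbdd : Bornology.IsBounded (range fun n => birkhoffSum f g n x₀)) :
    IsCompactInvariant (skewProduct f g)
      (closure (range fun n : ℕ => (skewProduct f g)^[n] (x₀, 0))) := by
  refine ⟨⟨_, subset_closure ⟨0, rfl⟩⟩, ?_, ?_⟩
  · refine (isCompact_univ.prod hbdd.isCompact_closure).closure_of_subset ?_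
    rintro _ ⟨n, rfl⟩
    dsimp only
    rw [skewProduct_iterate, zero_add]
    exact ⟨mem_univ _, subset_closure ⟨n, rfl⟩⟩
  · refine MapsTo.closure ?_ (continuous_skewProduct hf hg)
    rintro _ ⟨n, rfl⟩
    exact ⟨n + 1, iterate_succ_apply' _ _ _⟩

variable [T2Space X] {M : Set (X × ℝ)}

theorem Minimal.exists_mem_fiber_skewProduct
    (hM : Minimal (IsCompactInvariant (skewProduct f g)) M)
    (hf : ∀ x, Dense (range fun n : ℕ => f^[n] x)) (x : X) : ∃ t, (x, t) ∈ M := by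
  have hproj : Prod.fst '' M = univ := by
    refine eq_univ_of_mapsTo_of_dense_orbit hf (hM.prop.isCompact.image continuous_fst).isClosed
      (hM.prop.nonempty.image _) ?_
    rintro _ ⟨p, hp, rfl⟩
    exact ⟨_, hM.prop.mapsTo hp, rfl⟩
  obtain ⟨p, hp, rfl⟩ := hproj.symm ▸ mem_univ x
  exact ⟨p.2, hp⟩

/-- With `c = t - s`, `M ∩ (M + c)` is again nonempty, compact and invariant, since vertical
translation commutes with the skew product; by minimality `M ⊆ M + c`, so `M - c ⊆ M`. -/
theorem Minimal.eq_of_mem_fiber_skewProduct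
    (hM : Minimal (IsCompactInvariant (skewProduct f g)) M) {x : X} {s t : ℝ} (hs : (x, s) ∈ M)
    (ht : (x, t) ∈ M) : s = t := by
  set c := t - s
  let τ : X × ℝ → X × ℝ := fun p => (p.1, p.2 + c)
  have hτ : Continuous τ := by fun_prop
  have hA : IsCompactInvariant (skewProduct f g) (M ∩ τ '' M) := by
    refine ⟨⟨(x, t), ht, (x, s), hs, by simp [τ, c]⟩,
      hM.prop.isCompact.inter_right (hM.prop.isCompact.image hτ).isClosed, ?_⟩
    rintro _ ⟨hpM, q, hq, rfl⟩
    refine ⟨hM.prop.mapsTo hpM, _, hM.prop.mapsTo hq, ?_⟩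
    simp only [skewProduct, τ, Prod.mk.injEq, true_and]
    ring
  have hMτ : M ⊆ τ '' M := (hM.le_of_le hA inter_subset_left).trans inter_subset_right
  have hback : MapsTo (fun p => (p.1, p.2 + -c)) M M := by
    intro p hp
    obtain ⟨q, hq, rfl⟩ := hMτ hp
    simpa [τ] using hq
  have := eq_zero_of_mapsTo_vertical_translation hM.prop.isCompact hM.prop.nonempty hback
  linarith

end SkewProduct

theorem exists_continuous_coboundary_of_isBounded_birkhoffSum {X : Type*} [TopologicalSpace X]
    [CompactSpace X] [T2Space X] {f : X → X} (hf : Continuous f)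
    (hf_min : ∀ x, Dense (range fun n : ℕ => f^[n] x)) {g : X → ℝ} (hg : Continuous g) (x₀ : X)
    (hbdd : Bornology.IsBounded (range fun n => birkhoffSum f g n x₀)) :
    ∃ h : X → ℝ, Continuous h ∧ ∀ x, h (f x) - h x = g x := by
  obtain ⟨M, -, hM⟩ :=
    (isCompactInvariant_closure_orbit_skewProduct hf hg x₀ hbdd).exists_minimal_subset
  have hfiber (x : X) : ∃! t, (x, t) ∈ M := by
    obtain ⟨t, ht⟩ := hM.exists_mem_fiber_skewProduct hf_min x
    exact ⟨t, ht, fun s hs => hM.eq_of_mem_fiber_skewProduct hs ht⟩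
  obtain ⟨h, hcont, hgraph⟩ := hM.prop.isCompact.exists_continuous_of_existsUnique hfiber
  refine ⟨h, hcont, fun x => ?_⟩
  have hstep : (f x, h x + g x) ∈ M := hM.prop.mapsTo (hgraph x)
  rw [hM.eq_of_mem_fiber_skewProduct (hgraph (f x)) hstep]
  ring

theorem gottschalk_hedlund_rotation_general {d : ℕ} (α : Torus d) (hα : RatIndep α)
    (g : Torus d → ℝ) (hg : Continuous g)
    (θt : Torus d) (Bm Bp : ℝ)
    (hbound : ∀ n : ℕ, Bm < (∑ i ∈ Finset.range n, g (θt + i • α)) ∧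
      (∑ i ∈ Finset.range n, g (θt + i • α)) < Bp) :
    ∃ h : Torus d → ℝ, Continuous h ∧ ∀ θ, h (θ + α) - h θ = g θ := by
  have hrot (n : ℕ) (θ : Torus d) : (· + α)^[n] θ = θ + n • α := add_right_iterate_apply α θ
  refine exists_continuous_coboundary_of_isBounded_birkhoffSum (continuous_add_const α)
    (fun θ => by simpa only [hrot] using hα θ) hg θt ?_
  refine (Metric.isBounded_Icc Bm Bp).subset (range_subset_iff.2 fun n => ?_)
  simp only [birkhoffSum, hrot]
  exact ⟨(hbound n).1.le, (hbound n).2.le⟩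

/-- **Gottschalk–Hedlund theorem for an irrational torus rotation.**
If the Birkhoff sums of a continuous function `g` at one point `θ̃` are bounded
(`B₋ < Sⁿ(θ̃) < B₊` for all `n`), then the cohomological equation
`h(θ+α) − h(θ) = g(θ)` has a continuous solution. -/
theorem gottschalk_hedlund_rotation {d : ℕ} (α : Torus d) (hα : RatIndep α)
    (g : Torus d → ℝ) (hg : Continuous g)
    (θt : Torus d) (Bm Bp : ℝ) (hBm : Bm < 0) (hBp : 0 < Bp)
    (hbound : ∀ n : ℕ, Bm < (∑ i ∈ Finset.range n, g (θt + i • α)) ∧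
      (∑ i ∈ Finset.range n, g (θt + i • α)) < Bp) :
    ∃ h : Torus d → ℝ, Continuous h ∧ ∀ θ, h (θ + α) - h θ = g θ :=
  gottschalk_hedlund_rotation_general α hα g hg θt Bm Bp hbound
end

section
/- Let α ∈ 𝕋^d be rationally independent, F(θ,z) = (θ+α, f_θ(z)) a fibered holomorphic dynamics with the zero section as invariant curve (f_θ(0) = 0 for all θ), and suppose 𝒰 ⊂ 𝕋^d × ℂ is a bounded open invariant tube containing the zero section with F(𝒰) ⊂ 𝒰 and each fiber 𝒰_θ a simply connected domain containing 0. Set ρ₁(θ) = ∂_z f_θ(0) and S_u^n(θ) = Σ_{i=0}^{n-1} log|ρ₁(θ+iα)|. Then there exist constants B₊ > 0, B₋ < 0 and a point θ̃ ∈ 𝕋^d such that B₋ < S_u^n(θ̃) < B₊ for all n ≥ 0. -/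
/-!
By Schwarz's lemma, the fiber maps of `Fⁿ`, which send a disk `ball 0 r` contained in every
fiber into the disk `closedBall 0 C` containing every fiber, have derivative
`∏ i < n, ρ₁(θ + iα)` of norm at most `C / r` at `0`; so the Birkhoff sums `Sⁿ` of `log |ρ₁|`
are bounded above by `B = log (C / r)`, uniformly in `θ` and `n`. Since the rotation preserves
Haar measure and `∫ log |ρ₁| = 0`, each `S^N` is nonnegative somewhere, and at such a point `θ`
the cocycle identity `S^N(θ) = Sⁿ(θ) + S^(N-n)(θ + nα) ≤ Sⁿ(θ) + B` gives `Sⁿ(θ) ≥ -B` for all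
`n ≤ N`. Compactness of the torus produces a point where `Sⁿ ≥ -B` for every `n`.
-/

open Metric Set MeasureTheory

open Filter Finset Function Topology

theorem exists_pos_univ_prod_closedBall_subset {X E : Type*} [TopologicalSpace X] [CompactSpace X]
    [PseudoMetricSpace E] {U : Set (X × E)} (hU : IsOpen U) {c : E} (hc : ∀ x, (x, c) ∈ U) :
    ∃ r > 0, univ ×ˢ closedBall c r ⊆ U := by
  obtain ⟨u, v, -, hv, hu, hcv, huv⟩ := generalized_tube_lemma isCompact_univ isCompact_singleton hU
    (by rintro ⟨x, z⟩ ⟨-, rfl⟩; exact hc x)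
  obtain ⟨ε, hε, hεv⟩ := Metric.isOpen_iff.1 hv c (hcv rfl)
  refine ⟨ε / 2, half_pos hε, (prod_mono hu ?_).trans huv⟩
  exact (closedBall_subset_ball (half_lt_self hε)).trans hεv

theorem continuous_deriv_of_continuousOn_uncurry {X E : Type*} [TopologicalSpace X]
    [NormedAddCommGroup E] [NormedSpace ℂ E] [CompleteSpace E] {f : X → ℂ → E} {c : ℂ} {r : ℝ}
    (hr : 0 < r) (hf : ContinuousOn ↿f (univ ×ˢ closedBall c r))
    (hd : ∀ x, DifferentiableOn ℂ (f x) (ball c r)) :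
    Continuous fun x => deriv (f x) c := by
  refine continuous_iff_continuousAt.2 fun x => ?_
  have hunif : TendstoUniformlyOn f (f x) (𝓝 x) (closedBall c r) := fun u hu => by
    obtain ⟨v, hv, hvu⟩ :=
      (isCompact_closedBall c r).mem_uniformity_of_prod hf (mem_univ x) (symm_le_uniformity hu)
    rw [nhdsWithin_univ] at hv
    exact mem_of_superset hv fun y hy z hz => hvu y hy z hz
  exact ((hunif.mono ball_subset_closedBall).tendstoLocallyUniformlyOn.deriv
    (Eventually.of_forall hd) isOpen_ball).tendsto_at (mem_ball_self hr)

section FiberIterate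

variable {G 𝕜 : Type*} [AddMonoid G] (α : G) (f : G → 𝕜 → 𝕜)

/-- The fiber map of the `n`-th iterate of the skew product `(θ, z) ↦ (θ + α, f θ z)`. -/
def fiberIterate : ℕ → G → 𝕜 → 𝕜
  | 0, _ => id
  | n + 1, θ => f (θ + n • α) ∘ fiberIterate n θ

variable {α f}

theorem mapsTo_fiberIterate {U : G → Set 𝕜} (hf : ∀ θ, MapsTo (f θ) (U θ) (U (θ + α))) :
    ∀ n θ, MapsTo (fiberIterate α f n θ) (U θ) (U (θ + n • α))
  | 0, θ => by simpa [fiberIterate] using mapsTo_id (U θ)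
  | n + 1, θ => by
    rw [succ_nsmul, ← add_assoc]
    exact (hf _).comp (mapsTo_fiberIterate hf n θ)

theorem fiberIterate_apply_zero [Zero 𝕜] (hf : ∀ θ, f θ 0 = 0) :
    ∀ n θ, fiberIterate α f n θ 0 = 0
  | 0, _ => rfl
  | n + 1, θ => by simp [fiberIterate, fiberIterate_apply_zero hf n θ, hf]

variable [NontriviallyNormedField 𝕜]

theorem differentiableOn_fiberIterate {U : G → Set 𝕜} (hf : ∀ θ, MapsTo (f θ) (U θ) (U (θ + α)))
    (hd : ∀ θ, DifferentiableOn 𝕜 (f θ) (U θ)) :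
    ∀ n θ, DifferentiableOn 𝕜 (fiberIterate α f n θ) (U θ)
  | 0, _ => differentiableOn_id
  | n + 1, θ =>
    (hd _).comp (differentiableOn_fiberIterate hf hd n θ) (mapsTo_fiberIterate hf n θ)

theorem hasDerivAt_fiberIterate (hf : ∀ θ, f θ 0 = 0) (hd : ∀ θ, DifferentiableAt 𝕜 (f θ) 0) :
    ∀ n θ, HasDerivAt (fiberIterate α f n θ) (∏ i ∈ range n, deriv (f (θ + i • α)) 0) 0
  | 0, _ => by simpa [fiberIterate] using hasDerivAt_id (0 : 𝕜)
  | n + 1, θ => by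
    have hfn : HasDerivAt (f (θ + n • α)) (deriv (f (θ + n • α)) 0) (fiberIterate α f n θ 0) := by
      rw [fiberIterate_apply_zero hf]
      exact (hd _).hasDerivAt
    rw [prod_range_succ, mul_comm]
    exact hfn.comp 0 (hasDerivAt_fiberIterate hf hd n θ)

end FiberIterate

theorem birkhoffSum_add_right {G M : Type*} [AddMonoid G] [AddCommMonoid M] (α : G) (g : G → M)
    (n : ℕ) (θ : G) : birkhoffSum (· + α) g n θ = ∑ i ∈ range n, g (θ + i • α) := by
  simp only [birkhoffSum, add_right_iterate_apply]

section Schwarz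

variable {G : Type*} [AddMonoid G] {α : G} {f : G → ℂ → ℂ} {U : G → Set ℂ} {r C : ℝ}

theorem prod_norm_deriv_le_div (hr : 0 < r) (hball : ∀ θ, ball 0 r ⊆ U θ)
    (hbdd : ∀ θ, U θ ⊆ closedBall 0 C) (hmaps : ∀ θ, MapsTo (f θ) (U θ) (U (θ + α)))
    (hd : ∀ θ, DifferentiableOn ℂ (f θ) (U θ)) (hf : ∀ θ, f θ 0 = 0) (n : ℕ) (θ : G) :
    ∏ i ∈ range n, ‖deriv (f (θ + i • α)) 0‖ ≤ C / r := by
  have hd₀ θ : DifferentiableAt ℂ (f θ) 0 :=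
    ((hd θ).mono (hball θ)).differentiableAt (ball_mem_nhds 0 hr)
  have hmaps_n : MapsTo (fiberIterate α f n θ) (ball 0 r)
      (closedBall (fiberIterate α f n θ 0) C) := by
    rw [fiberIterate_apply_zero hf]
    exact ((mapsTo_fiberIterate hmaps n θ).mono_left (hball θ)).mono_right (hbdd _)
  have hschwarz := Complex.norm_deriv_le_div_of_mapsTo_ball
    ((differentiableOn_fiberIterate hmaps hd n θ).mono (hball θ)) hmaps_n hr
  rwa [(hasDerivAt_fiberIterate hf hd₀ n θ).deriv, norm_prod] at hschwarz

theorem birkhoffSum_log_norm_deriv_le (hr : 0 < r) (hball : ∀ θ, ball 0 r ⊆ U θ)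
    (hbdd : ∀ θ, U θ ⊆ closedBall 0 C) (hmaps : ∀ θ, MapsTo (f θ) (U θ) (U (θ + α)))
    (hd : ∀ θ, DifferentiableOn ℂ (f θ) (U θ)) (hf : ∀ θ, f θ 0 = 0)
    (hρ : ∀ θ, deriv (f θ) 0 ≠ 0) (n : ℕ) (θ : G) :
    birkhoffSum (· + α) (fun θ => Real.log ‖deriv (f θ) 0‖) n θ ≤ Real.log (C / r) := by
  have hpos (i : ℕ) : 0 < ‖deriv (f (θ + i • α)) 0‖ := norm_pos_iff.2 (hρ _)
  rw [birkhoffSum_add_right, ← Real.log_prod fun i _ => (hpos i).ne']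
  exact Real.log_le_log (prod_pos fun i _ => hpos i)
    (prod_norm_deriv_le_div hr hball hbdd hmaps hd hf n θ)

end Schwarz

section Ergodic

variable {X : Type*} {T : X → X} {g : X → ℝ}

theorem neg_le_birkhoffSum_of_nonneg {B : ℝ} (hB : ∀ n x, birkhoffSum T g n x ≤ B) {N n : ℕ}
    {x : X} (hN : 0 ≤ birkhoffSum T g N x) (hn : n ≤ N) : -B ≤ birkhoffSum T g n x := by
  obtain ⟨k, rfl⟩ := Nat.exists_eq_add_of_le hn
  have := hB k (T^[n] x)
  rw [birkhoffSum_add] at hN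
  linarith

variable [MeasurableSpace X] {μ : Measure X}

theorem integrable_birkhoffSum (hT : MeasurePreserving T μ μ) (hg : Integrable g μ) (n : ℕ) :
    Integrable (birkhoffSum T g n) μ :=
  integrable_finsetSum (range n) fun k _ => (hT.iterate k).integrable_comp_of_integrable hg

theorem integral_birkhoffSum (hT : MeasurePreserving T μ μ) (hg : Integrable g μ) (n : ℕ) :
    ∫ x, birkhoffSum T g n x ∂μ = n * ∫ x, g x ∂μ := by
  have hcomp (k : ℕ) : ∫ x, g (T^[k] x) ∂μ = ∫ x, g x ∂μ := by
    rw [← integral_map (hT.iterate k).aemeasurable (by rw [(hT.iterate k).map_eq]; exact hg.1),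
      (hT.iterate k).map_eq]
  simp only [birkhoffSum]
  rw [integral_finsetSum (range n) fun k _ =>
    (show Integrable (fun x => g (T^[k] x)) μ from (hT.iterate k).integrable_comp_of_integrable hg)]
  simp [hcomp]

theorem exists_birkhoffSum_nonneg [IsProbabilityMeasure μ] (hT : MeasurePreserving T μ μ)
    (hg : Integrable g μ) (hg₀ : 0 ≤ ∫ x, g x ∂μ) (n : ℕ) : ∃ x, 0 ≤ birkhoffSum T g n x := by
  obtain ⟨x, hx⟩ := exists_integral_le (integrable_birkhoffSum hT hg n)
  exact ⟨x, (integral_birkhoffSum hT hg n ▸ mul_nonneg n.cast_nonneg hg₀).trans hx⟩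

theorem exists_forall_neg_le_birkhoffSum [TopologicalSpace X] [CompactSpace X]
    [OpensMeasurableSpace X] [IsProbabilityMeasure μ] (hT : MeasurePreserving T μ μ)
    (hTc : Continuous T) (hg : Continuous g) (hg₀ : 0 ≤ ∫ x, g x ∂μ) {B : ℝ}
    (hB : ∀ n x, birkhoffSum T g n x ≤ B) : ∃ x, ∀ n, -B ≤ birkhoffSum T g n x := by
  have hSc (n : ℕ) : Continuous (birkhoffSum T g n) :=
    continuous_finsetSum _ fun k _ => hg.comp (hTc.iterate k)
  set A : ℕ → Set X := fun N => ⋂ n ∈ Set.Iic N, {x | -B ≤ birkhoffSum T g n x}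
  have hAc (N : ℕ) : IsClosed (A N) :=
    isClosed_biInter fun n _ => isClosed_le continuous_const (hSc n)
  have hAne (N : ℕ) : (A N).Nonempty := by
    obtain ⟨x, hx⟩ := exists_birkhoffSum_nonneg hT (hg.integrable_of_hasCompactSupport
      (HasCompactSupport.of_compactSpace g)) hg₀ N
    exact ⟨x, mem_iInter₂.2 fun n hn => neg_le_birkhoffSum_of_nonneg hB hx hn⟩
  have hAanti (N : ℕ) : A (N + 1) ⊆ A N :=
    biInter_subset_biInter_left (Iic_subset_Iic.2 N.le_succ)
  obtain ⟨x, hx⟩ := IsCompact.nonempty_iInter_of_sequence_nonempty_isCompact_isClosed A hAanti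
    hAne (hAc 0).isCompact hAc
  exact ⟨x, fun n => mem_iInter₂.1 (mem_iInter.1 hx n) n Set.self_mem_Iic⟩

end Ergodic

instance : IsProbabilityMeasure (volume : Measure (AddCircle (1 : ℝ))) :=
  ⟨by rw [AddCircle.measure_univ]; norm_num⟩

theorem birkhoff_sums_bounded_at_a_point_general {d : ℕ} (α : Torus d)
    (f : Torus d → ℂ → ℂ) (𝒰 : Set (Torus d × ℂ))
    (hopen : IsOpen 𝒰)
    (hbdd : Bornology.IsBounded (Prod.snd '' 𝒰))
    (hzero : ∀ θ : Torus d, (θ, (0:ℂ)) ∈ 𝒰)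
    (hcont : ContinuousOn (fun p : Torus d × ℂ => f p.1 p.2) 𝒰)
    (hhol : ∀ θ : Torus d, DifferentiableOn ℂ (f θ) {z : ℂ | (θ, z) ∈ 𝒰})
    (hfix : ∀ θ : Torus d, f θ 0 = 0)
    (hinv : ∀ p ∈ 𝒰, (p.1 + α, f p.1 p.2) ∈ 𝒰)
    (hderiv : ∀ θ : Torus d, deriv (f θ) 0 ≠ 0)
    (hindiff : (∫ θ : Torus d, Real.log ‖deriv (f θ) 0‖) = 0) :
    ∃ Bp > (0:ℝ), ∃ Bm < (0:ℝ), ∃ θt : Torus d,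
      ∀ n : ℕ, Bm < (∑ i ∈ Finset.range n, Real.log ‖deriv (f (θt + i • α)) 0‖) ∧
        (∑ i ∈ Finset.range n, Real.log ‖deriv (f (θt + i • α)) 0‖) < Bp := by
  obtain ⟨r, hr, hr𝒰⟩ := exists_pos_univ_prod_closedBall_subset hopen hzero
  obtain ⟨C, hC⟩ := hbdd.subset_closedBall 0
  have hball (θ : Torus d) : ball 0 r ⊆ {z | (θ, z) ∈ 𝒰} := fun z hz =>
    hr𝒰 ⟨mem_univ θ, ball_subset_closedBall hz⟩
  have hρ : Continuous fun θ => deriv (f θ) 0 :=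
    continuous_deriv_of_continuousOn_uncurry hr (hcont.mono hr𝒰) fun θ => (hhol θ).mono (hball θ)
  have hupper (n : ℕ) (θ : Torus d) :
      birkhoffSum (· + α) (fun θ => Real.log ‖deriv (f θ) 0‖) n θ ≤ Real.log (C / r) :=
    birkhoffSum_log_norm_deriv_le hr hball (fun θ z hz => hC ⟨(θ, z), hz, rfl⟩)
      (fun θ z hz => hinv (θ, z) hz) hhol hfix hderiv n θ
  obtain ⟨θt, hlower⟩ := exists_forall_neg_le_birkhoffSum (measurePreserving_add_right volume α)
    (continuous_add_const α) (hρ.norm.log fun θ => norm_ne_zero_iff.2 (hderiv θ)) hindiff.ge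
    hupper
  set B := Real.log (C / r)
  refine ⟨|B| + 1, by positivity, -(|B| + 1), by linarith [abs_nonneg B], θt, fun n => ?_⟩
  have hl := hlower n
  have hu := hupper n θt
  rw [birkhoffSum_add_right] at hl hu
  constructor <;> linarith [le_abs_self B]

/-- **Bounded Birkhoff sums at some point.**
For an indifferent invariant zero section of a fibered holomorphic dynamics admitting a
bounded open invariant tube with simply connected fibers, there are constants `B₊ > 0 > B₋`
and a point `θ̃` such that `B₋ < S_u^n(θ̃) < B₊` for all `n`. -/
theorem birkhoff_sums_bounded_at_a_point {d : ℕ} (α : Torus d) (hα : RatIndep α)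
    (f : Torus d → ℂ → ℂ) (𝒰 : Set (Torus d × ℂ))
    (hopen : IsOpen 𝒰)
    (hbdd : Bornology.IsBounded (Prod.snd '' 𝒰))
    (hzero : ∀ θ : Torus d, (θ, (0:ℂ)) ∈ 𝒰)
    (hsc : ∀ θ : Torus d, SimplyConnectedSpace {z : ℂ // (θ, z) ∈ 𝒰})
    (hcont : ContinuousOn (fun p : Torus d × ℂ => f p.1 p.2) 𝒰)
    (hhol : ∀ θ : Torus d, DifferentiableOn ℂ (f θ) {z : ℂ | (θ, z) ∈ 𝒰})
    (hinj : Set.InjOn (fun p : Torus d × ℂ => (p.1 + α, f p.1 p.2)) 𝒰)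
    (hfix : ∀ θ : Torus d, f θ 0 = 0)
    (hinv : ∀ p ∈ 𝒰, (p.1 + α, f p.1 p.2) ∈ 𝒰)
    (hderiv : ∀ θ : Torus d, deriv (f θ) 0 ≠ 0)
    (hindiff : (∫ θ : Torus d, Real.log ‖deriv (f θ) 0‖) = 0) :
    ∃ Bp > (0:ℝ), ∃ Bm < (0:ℝ), ∃ θt : Torus d,
      ∀ n : ℕ, Bm < (∑ i ∈ Finset.range n, Real.log ‖deriv (f (θt + i • α)) 0‖) ∧
        (∑ i ∈ Finset.range n, Real.log ‖deriv (f (θt + i • α)) 0‖) < Bp :=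
  birkhoff_sums_bounded_at_a_point_general α f 𝒰 hopen hbdd hzero hcont hhol hfix hinv hderiv
    hindiff
end

section
/- Let 𝒰 ⊂ 𝕋^d × ℂ be an open set such that each fiber 𝒰_θ = {z : (θ,z) ∈ 𝒰} is a simply connected domain containing 0, different from ℂ. Then the function R : 𝕋^d → ℝ₊ assigning to θ the conformal radius of 𝒰_θ at 0 is lower semicontinuous. -/
open Metric Set

/-! For `θ` near `θ₀` the fiber `𝒰_θ` still contains the compact set `h θ₀ '' closedBall 0 ρ`
(tube lemma), so `ψ = (h θ)⁻¹ ∘ h θ₀` maps `ball 0 ρ` into the unit disc and fixes `0`.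
Schwarz's lemma gives `‖ψ' 0‖ ≤ 1 / ρ`, and the chain rule `R θ₀ = R θ * ψ' 0` then yields
`ρ * R θ₀ ≤ R θ`. The inverse `(h θ)⁻¹` is holomorphic because an injective holomorphic map has
no critical points: near a critical point it is, up to a constant, the `m`-th power (`m ≥ 2`) of a
local coordinate, hence `m`-to-one. -/

open Filter Function
open scoped Topology

theorem AnalyticAt.exists_pow_eq {g : ℂ → ℂ} {z₀ : ℂ} (hg : AnalyticAt ℂ g z₀) (hg₀ : g z₀ ≠ 0)
    {n : ℕ} (hn : n ≠ 0) : ∃ r : ℂ → ℂ, AnalyticAt ℂ r z₀ ∧ r z₀ ≠ 0 ∧ ∀ z, r z ^ n = g z := by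
  obtain ⟨c, hc⟩ := IsAlgClosed.exists_pow_nat_eq (g z₀) (Nat.pos_of_ne_zero hn)
  -- `g z / g z₀` is near `1`, inside the slit plane where `(·) ^ (n⁻¹ : ℂ)` is analytic
  refine ⟨fun z ↦ c * (g z / g z₀) ^ (n⁻¹ : ℂ), ?_, ?_, fun z ↦ ?_⟩
  · refine analyticAt_const.mul ((hg.div analyticAt_const hg₀).cpow analyticAt_const ?_)
    simp [div_self hg₀]
  · have hc₀ : c ≠ 0 := by rintro rfl; exact hg₀ (by rw [← hc, zero_pow hn])
    simpa [div_self hg₀] using hc₀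
  · rw [mul_pow, Complex.cpow_nat_inv_pow _ hn, hc, mul_div_cancel₀ _ hg₀]

theorem not_injOn_pow_of_map_nhds_eq {ψ : ℂ → ℂ} {z₀ : ℂ} (hψ : map ψ (𝓝 z₀) = 𝓝 0)
    {m : ℕ} (hm : 1 < m) {s : Set ℂ} (hs : s ∈ 𝓝 z₀) : ¬ InjOn (fun z ↦ ψ z ^ m) s := by
  intro hinj
  set ζ : ℂ := Complex.exp (2 * Real.pi * Complex.I / m)
  have hζ : IsPrimitiveRoot ζ m := Complex.isPrimitiveRoot_exp m (by omega)
  -- `w` and `ζ * w` both have preimages under `ψ` in `s`, with the same `m`-th power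
  have hV : ψ '' s ∩ (ζ * ·) ⁻¹' (ψ '' s) ∈ 𝓝 (0 : ℂ) := by
    have hψs : ψ '' s ∈ 𝓝 (0 : ℂ) := hψ ▸ image_mem_map hs
    refine inter_mem hψs ((continuous_const.mul continuous_id).continuousAt.preimage_mem_nhds ?_)
    simpa using hψs
  obtain ⟨w, ⟨⟨z, hz, rfl⟩, z', hz', hz'z⟩, hw⟩ := Filter.nonempty_of_mem
    (inter_mem (nhdsWithin_le_nhds hV) (self_mem_nhdsWithin (s := {(0 : ℂ)}ᶜ)))
  have hzz' : z' = z := hinj hz' hz (by simp only [hz'z, mul_pow, hζ.pow_eq_one, one_mul])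
  subst hzz'
  exact hζ.ne_one hm (mul_right_cancel₀ hw (by rw [one_mul]; exact hz'z.symm))

theorem Set.InjOn.not_eventually_eq {X Y : Type*} [TopologicalSpace X] {f : X → Y} {s : Set X}
    {z₀ : X} [(𝓝[≠] z₀).NeBot] (hinj : InjOn f s) (hs : s ∈ 𝓝 z₀) :
    ¬ ∀ᶠ z in 𝓝 z₀, f z = f z₀ := by
  intro hconst
  obtain ⟨z, ⟨hzs, hz⟩, hne⟩ := Filter.nonempty_of_mem
    (inter_mem (nhdsWithin_le_nhds (inter_mem hs hconst)) (self_mem_nhdsWithin (s := {z₀}ᶜ)))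
  exact hne (hinj hzs (mem_of_mem_nhds hs) hz)

theorem AnalyticAt.deriv_ne_zero_of_injOn {f : ℂ → ℂ} {s : Set ℂ} {z₀ : ℂ}
    (hf : AnalyticAt ℂ f z₀) (hs : s ∈ 𝓝 z₀) (hinj : InjOn f s) : deriv f z₀ ≠ 0 := by
  intro hd
  have hord : 2 ≤ analyticOrderAt (f · - f z₀) z₀ := by
    rw [← hf.analyticOrderAt_deriv_add_one]
    have h₁ : 1 ≤ analyticOrderAt (deriv f) z₀ :=
      Order.one_le_iff_ne_zero.2 (analyticOrderAt_ne_zero.2 ⟨hf.deriv, hd⟩)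
    simpa [one_add_one_eq_two] using add_le_add_left h₁ 1
  have hfin : analyticOrderAt (f · - f z₀) z₀ ≠ ⊤ := by
    simpa [analyticOrderAt_eq_top, sub_eq_zero] using hinj.not_eventually_eq hs
  obtain ⟨m, hm⟩ := ENat.ne_top_iff_exists.1 hfin
  have hm2 : 1 < m := by exact_mod_cast hm ▸ hord
  obtain ⟨g, hg, hg₀, hfg⟩ := ((hf.sub analyticAt_const).analyticOrderAt_eq_natCast).1 hm.symm
  obtain ⟨r, hr, hr₀, hrg⟩ := hg.exists_pow_eq hg₀ (by omega : m ≠ 0)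
  have hψ : HasStrictDerivAt (fun z ↦ (z - z₀) * r z) (r z₀) z₀ := by
    have hsub : HasStrictDerivAt (· - z₀) 1 z₀ := (hasStrictDerivAt_id z₀).sub_const z₀
    simpa using hsub.fun_mul hr.hasStrictDerivAt
  refine not_injOn_pow_of_map_nhds_eq (by simpa using hψ.map_nhds_eq hr₀) hm2 (inter_mem hs hfg)
    fun z hz z' hz' hzz' ↦ hinj hz.1 hz'.1 ?_
  simp only [mem_inter_iff, mem_ofPred_eq, Pi.sub_apply, smul_eq_mul, ← hrg, ← mul_pow]
    at hz hz' hzz'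
  rw [← sub_left_inj, hz.2, hz'.2, hzz']

theorem hasStrictDerivAt_invFunOn_of_injOn {φ : ℂ → ℂ} {U : Set ℂ} {ζ : ℂ} (hU : IsOpen U)
    (hφ : DifferentiableOn ℂ φ U) (hinj : InjOn φ U) (hζ : ζ ∈ U) :
    HasStrictDerivAt (invFunOn φ U) (deriv φ ζ)⁻¹ (φ ζ) := by
  have hφa : AnalyticAt ℂ φ ζ := hφ.analyticAt (hU.mem_nhds hζ)
  exact hφa.hasStrictDerivAt.to_local_left_inverse
    (hφa.deriv_ne_zero_of_injOn (hU.mem_nhds hζ) hinj)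
    (eventually_of_mem (hU.mem_nhds hζ) hinj.leftInvOn_invFunOn)

theorem mul_norm_deriv_le_norm_deriv_of_mapsTo_image {φ g : ℂ → ℂ} {ρ : ℝ} (hρ : 0 < ρ)
    (hφ : DifferentiableOn ℂ φ (ball 0 1)) (hinj : InjOn φ (ball 0 1)) (hφ₀ : φ 0 = 0)
    (hg : DifferentiableOn ℂ g (ball 0 ρ)) (hg₀ : g 0 = 0)
    (hmaps : MapsTo g (ball 0 ρ) (φ '' ball 0 1)) :
    ρ * ‖deriv g 0‖ ≤ ‖deriv φ 0‖ := by
  set ψ := invFunOn φ (ball 0 1) ∘ g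
  have hψ : DifferentiableOn ℂ ψ (ball 0 ρ) := by
    intro z hz
    obtain ⟨ζ, hζ, hgz⟩ := hmaps hz
    have hinv : DifferentiableAt ℂ (invFunOn φ (ball 0 1)) (g z) :=
      hgz ▸ (hasStrictDerivAt_invFunOn_of_injOn isOpen_ball hφ hinj hζ).hasDerivAt.differentiableAt
    exact (hinv.comp z (hg.differentiableAt (isOpen_ball.mem_nhds hz))).differentiableWithinAt
  have hψmaps : MapsTo ψ (ball 0 ρ) (ball 0 1) := fun z hz ↦ invFunOn_mem (hmaps hz)
  have hψ₀ : ψ 0 = 0 := by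
    simpa [ψ, hg₀, hφ₀] using hinj.leftInvOn_invFunOn (mem_ball_self one_pos)
  have hschwarz : ‖deriv ψ 0‖ ≤ 1 / ρ := by
    refine Complex.norm_deriv_le_div_of_mapsTo_ball hψ ?_ hρ
    rw [hψ₀]
    exact hψmaps.mono_right ball_subset_closedBall
  have hchain : deriv g 0 = deriv φ 0 * deriv ψ 0 := by
    have hφψ : φ ∘ ψ =ᶠ[𝓝 0] g :=
      eventually_of_mem (ball_mem_nhds 0 hρ) fun z hz ↦ invFunOn_eq (hmaps hz)
    have hφd : DifferentiableAt ℂ φ (ψ 0) :=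
      hφ.differentiableAt (by simpa [hψ₀] using ball_mem_nhds (0 : ℂ) one_pos)
    rw [← hφψ.deriv_eq, deriv_comp _ hφd (hψ.differentiableAt (ball_mem_nhds 0 hρ)), hψ₀]
  calc ρ * ‖deriv g 0‖ = ‖deriv φ 0‖ * (ρ * ‖deriv ψ 0‖) := by rw [hchain, norm_mul]; ring
    _ ≤ ‖deriv φ 0‖ * 1 := by
      gcongr
      exact (le_div_iff₀' hρ).1 hschwarz
    _ = ‖deriv φ 0‖ := mul_one _

theorem conformal_radius_lsc_general {d : ℕ} (𝒰 : Set (Torus d × ℂ))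
    (hopen : IsOpen 𝒰)
    (h : Torus d → ℂ → ℂ) (R : Torus d → ℝ)
    (hhol : ∀ θ : Torus d, DifferentiableOn ℂ (h θ) (ball (0:ℂ) 1))
    (hbij : ∀ θ : Torus d, Set.BijOn (h θ) (ball (0:ℂ) 1) {z : ℂ | (θ, z) ∈ 𝒰})
    (hfix : ∀ θ : Torus d, h θ 0 = 0)
    (hpos : ∀ θ : Torus d, 0 < R θ)
    (hR : ∀ θ : Torus d, deriv (h θ) 0 = (R θ : ℂ)) :
    LowerSemicontinuous R := by
  intro θ₀ c hc
  obtain ⟨ρ, hρ, hρ₁⟩ := exists_between (max_lt ((div_lt_one (hpos θ₀)).2 hc) one_pos)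
  obtain ⟨hcρ, hρ₀⟩ := max_lt_iff.1 hρ
  have hK : IsCompact (h θ₀ '' closedBall 0 ρ) := (isCompact_closedBall 0 ρ).image_of_continuousOn
    ((hhol θ₀).continuousOn.mono (closedBall_subset_ball hρ₁))
  have htube : ∀ᶠ θ in 𝓝 θ₀, ∀ z ∈ h θ₀ '' closedBall 0 ρ, (θ, z) ∈ 𝒰 := by
    refine hK.eventually_forall_of_forall_eventually fun z hz ↦ hopen.eventually_mem ?_
    obtain ⟨x, hx, rfl⟩ := hz
    exact (hbij θ₀).mapsTo (closedBall_subset_ball hρ₁ hx)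
  filter_upwards [htube] with θ hθ
  have hmaps : MapsTo (h θ₀) (ball 0 ρ) (h θ '' ball 0 1) := fun z hz ↦
    (hbij θ).image_eq ▸ hθ _ (mem_image_of_mem _ (ball_subset_closedBall hz))
  have hle := mul_norm_deriv_le_norm_deriv_of_mapsTo_image hρ₀ (hhol θ) (hbij θ).injOn (hfix θ)
    ((hhol θ₀).mono (ball_subset_ball hρ₁.le)) (hfix θ₀) hmaps
  rw [hR, hR, Complex.norm_real, Complex.norm_real, Real.norm_of_nonneg (hpos θ).le,
    Real.norm_of_nonneg (hpos θ₀).le] at hle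
  calc c < ρ * R θ₀ := (div_lt_iff₀ (hpos θ₀)).1 hcρ
    _ ≤ R θ := hle

/-- **Lower semicontinuity of the fiberwise conformal radius.**
If `𝒰 ⊆ 𝕋^d × ℂ` is open with simply connected fibers `𝒰_θ ∋ 0`, `𝒰_θ ≠ ℂ`, and
`h θ : 𝔻 → 𝒰_θ` are the Riemann uniformizations with `h θ 0 = 0`, `(h θ)'(0) = R θ > 0`,
then the conformal radius function `R` is lower semicontinuous. -/
theorem conformal_radius_lsc {d : ℕ} (𝒰 : Set (Torus d × ℂ))
    (hopen : IsOpen 𝒰)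
    (hzero : ∀ θ : Torus d, (θ, (0:ℂ)) ∈ 𝒰)
    (hne : ∀ θ : Torus d, {z : ℂ | (θ, z) ∈ 𝒰} ≠ Set.univ)
    (hconn : ∀ θ : Torus d, IsConnected {z : ℂ | (θ, z) ∈ 𝒰})
    (h : Torus d → ℂ → ℂ) (R : Torus d → ℝ)
    (hhol : ∀ θ : Torus d, DifferentiableOn ℂ (h θ) (ball (0:ℂ) 1))
    (hbij : ∀ θ : Torus d, Set.BijOn (h θ) (ball (0:ℂ) 1) {z : ℂ | (θ, z) ∈ 𝒰})
    (hfix : ∀ θ : Torus d, h θ 0 = 0)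
    (hpos : ∀ θ : Torus d, 0 < R θ)
    (hR : ∀ θ : Torus d, deriv (h θ) 0 = (R θ : ℂ)) :
    LowerSemicontinuous R :=
  conformal_radius_lsc_general 𝒰 hopen h R hhol hbij hfix hpos hR
end

section
/- Let α ∈ 𝕋^d be rationally independent, F(θ,z) = (θ+α, f_θ(z)) a fibered holomorphic dynamics with the zero section invariant and |∂_z f_θ(0)| = 1 for all θ. Let 𝒰 be a bounded open invariant tube (F(𝒰) ⊂ 𝒰) containing the zero section whose fibers 𝒰_θ are simply connected domains containing 0. Then the conformal radius R(θ) of the fiber 𝒰_θ at 0 is independent of θ. -/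
open Metric Set

/-!
Write `G_θ` for the inverse of the uniformization `h θ`. Schwarz's lemma applied to
`G_{θ+α} ∘ f_θ ∘ h_θ : 𝔻 → 𝔻`, whose derivative at `0` has modulus `R θ / R (θ + α)`, gives
`R θ ≤ R (θ + α)`. Applied to `G_θ ∘ h_{θ₀}` on the disc of radius `r < 1`, which lands in `𝒰_θ`
for `θ` close to `θ₀` because `𝒰` is open, it gives `r R θ₀ ≤ R θ`; so `R` is lower
semicontinuous. A lower semicontinuous function that does not decrease along a rotation with
dense orbits is constant: the superlevel set `{R > c}` around `θ'` contains some `θ - n α`,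
and `R (θ - n α) ≤ R θ`.
-/

open Function Filter Topology

theorem Set.BijOn.continuousOn_invFunOn {X Y : Type*} [TopologicalSpace X] [TopologicalSpace Y]
    [Nonempty X] {s : Set X} {t : Set Y} {g : X → Y} (hb : BijOn g s t) (hs : IsOpen s)
    (hg : ∀ V ⊆ s, IsOpen V → IsOpen (g '' V)) : ContinuousOn (invFunOn g s) t := by
  refine continuousOn_iff'.2 fun V hV =>
    ⟨g '' (V ∩ s), hg _ inter_subset_right (hV.inter hs), ?_⟩
  rw [hb.injOn.leftInvOn_invFunOn.image_inter', hb.image_eq, inter_assoc, inter_self]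

theorem Set.InjOn.hasDerivAt_invFunOn {𝕜 : Type*} [NontriviallyNormedField 𝕜] {s : Set 𝕜}
    {g : 𝕜 → 𝕜} {c x : 𝕜} (hg : InjOn g s) (hx : x ∈ s) (hgs : g '' s ∈ 𝓝 (g x))
    (hcont : ContinuousAt (invFunOn g s) (g x)) (hd : HasDerivAt g c x) (hc : c ≠ 0) :
    HasDerivAt (invFunOn g s) c⁻¹ (g x) :=
  HasDerivAt.of_local_left_inverse hcont (by rwa [hg.leftInvOn_invFunOn hx]) hc
    (eventually_of_mem hgs fun _ hy => (surjOn_image g s).rightInvOn_invFunOn hy)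

namespace AnalyticOnNhd

variable {s : Set ℂ} {g : ℂ → ℂ} {z₀ : ℂ}

theorem isOpen_image_of_deriv_ne_zero (hg : AnalyticOnNhd ℂ g s) (hs : IsOpen s)
    (hsc : IsPreconnected s) (hz₀ : z₀ ∈ s) (hd : deriv g z₀ ≠ 0) {V : Set ℂ} (hV : V ⊆ s)
    (hVo : IsOpen V) : IsOpen (g '' V) := by
  rcases hg.is_constant_or_isOpen hsc with ⟨w, hw⟩ | hopen
  · have hconst : g =ᶠ[𝓝 z₀] fun _ => w := eventually_of_mem (hs.mem_nhds hz₀) hw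
    exact absurd (hconst.deriv_eq.trans (deriv_const z₀ w)) hd
  · exact hopen V hV hVo

theorem eventually_deriv_ne_zero (hg : AnalyticOnNhd ℂ g s) (hsc : IsPreconnected s)
    (hz₀ : z₀ ∈ s) (hd : deriv g z₀ ≠ 0) {z : ℂ} (hz : z ∈ s) :
    ∀ᶠ w in 𝓝[≠] z, deriv g w ≠ 0 :=
  (hg.deriv z hz).eventually_eq_zero_or_eventually_ne_zero.resolve_left fun h0 =>
    hd (hg.deriv.eqOn_zero_of_preconnected_of_eventuallyEq_zero hsc hz h0 hz₀)

end AnalyticOnNhd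

namespace Complex

theorem differentiableOn_invFunOn_image {s : Set ℂ} {g : ℂ → ℂ} {z₀ : ℂ}
    (hg : DifferentiableOn ℂ g s) (hs : IsOpen s) (hsc : IsPreconnected s) (hinj : InjOn g s)
    (hz₀ : z₀ ∈ s) (hd : deriv g z₀ ≠ 0) : DifferentiableOn ℂ (invFunOn g s) (g '' s) := by
  have han := hg.analyticOnNhd hs
  have hopen : ∀ V ⊆ s, IsOpen V → IsOpen (g '' V) :=
    fun V => han.isOpen_image_of_deriv_ne_zero hs hsc hz₀ hd
  have hcont := hinj.bijOn_image.continuousOn_invFunOn hs hopen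
  have himg : ∀ x ∈ s, g '' s ∈ 𝓝 (g x) :=
    fun x hx => (hopen s subset_rfl hs).mem_nhds (mem_image_of_mem g hx)
  rintro _ ⟨z, hz, rfl⟩
  obtain ⟨N, hNsub, hNo, hzN⟩ := _root_.mem_nhds_iff.1 <|
    inter_mem (eventually_nhdsWithin_iff.1 (han.eventually_deriv_ne_zero hsc hz₀ hd hz))
      (hs.mem_nhds hz)
  have hNs : N ⊆ s := fun x hx => (hNsub hx).2
  have hgN : g '' N ∈ 𝓝 (g z) := (hopen N hNs hNo).mem_nhds (mem_image_of_mem g hzN)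
  -- `z` is the only possible critical point in `N`; the removable singularity theorem covers it
  refine (((differentiableOn_compl_singleton_and_continuousAt_iff hgN).1
    ⟨?_, hcont.continuousAt (himg z hz)⟩).differentiableAt hgN).differentiableWithinAt
  rintro _ ⟨⟨x, hxN, rfl⟩, hne⟩
  have hxs := hNs hxN
  have hxz : x ≠ z := by rintro rfl; exact hne rfl
  exact (hinj.hasDerivAt_invFunOn hxs (himg x hxs) (hcont.continuousAt (himg x hxs))
    (hg.differentiableAt (hs.mem_nhds hxs)).hasDerivAt ((hNsub hxN).1 hxz)).differentiableAt
    |>.differentiableWithinAt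

theorem mul_norm_deriv_le_of_mapsTo_image {h φ : ℂ → ℂ} {r : ℝ}
    (hh : DifferentiableOn ℂ h (ball 0 1)) (hinj : InjOn h (ball 0 1)) (h0 : h 0 = 0)
    (hh0 : deriv h 0 ≠ 0) (hr : 0 < r) (hφ : DifferentiableOn ℂ φ (ball 0 r))
    (hφ0 : φ 0 = 0) (hmaps : MapsTo φ (ball 0 r) (h '' ball 0 1)) :
    r * ‖deriv φ 0‖ ≤ ‖deriv h 0‖ := by
  set G := invFunOn h (ball (0 : ℂ) 1)
  have hD : (0 : ℂ) ∈ ball (0 : ℂ) 1 := mem_ball_self one_pos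
  have hDc : IsPreconnected (ball (0 : ℂ) 1) := (convex_ball 0 1).isPreconnected
  have hG : DifferentiableOn ℂ G (h '' ball 0 1) :=
    differentiableOn_invFunOn_image hh isOpen_ball hDc hinj hD hh0
  have himg : h '' ball 0 1 ∈ 𝓝 (h 0) :=
    ((hh.analyticOnNhd isOpen_ball).isOpen_image_of_deriv_ne_zero isOpen_ball hDc hD hh0
      subset_rfl isOpen_ball).mem_nhds (mem_image_of_mem h hD)
  have hG0 : G 0 = 0 := by simpa [h0] using hinj.leftInvOn_invFunOn hD
  have hGd : HasDerivAt G (deriv h 0)⁻¹ (φ 0) := by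
    simpa [h0, hφ0] using hinj.hasDerivAt_invFunOn hD himg
      (hG.differentiableAt himg).continuousAt
      (hh.differentiableAt (isOpen_ball.mem_nhds hD)).hasDerivAt hh0
  have hschwarz := norm_deriv_le_div_of_mapsTo_ball (hG.comp hφ hmaps)
    (fun z hz => by
      rw [comp_apply, hφ0, hG0]
      exact ball_subset_closedBall (hinj.bijOn_image.surjOn.mapsTo_invFunOn (hmaps hz))) hr
  rw [(hGd.comp 0 (hφ.differentiableAt (isOpen_ball.mem_nhds (mem_ball_self hr))).hasDerivAt).deriv,
    norm_mul, norm_inv, inv_mul_le_iff₀ (norm_pos_iff.2 hh0), mul_one_div,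
    le_div_iff₀ hr] at hschwarz
  linarith

end Complex

theorem lowerSemicontinuous_of_forall_mul_le {X : Type*} [TopologicalSpace X] {R : X → ℝ}
    (hpos : ∀ x, 0 < R x) (h : ∀ x r, 0 < r → r < 1 → ∀ᶠ x' in 𝓝 x, r * R x ≤ R x') :
    LowerSemicontinuous R := by
  intro x c hc
  obtain ⟨r, hr, hr1⟩ := exists_between (max_lt ((div_lt_one (hpos x)).2 hc) one_pos)
  have hcr : c < r * R x := (div_lt_iff₀ (hpos x)).1 ((le_max_left _ _).trans_lt hr)
  exact (h x r ((le_max_right _ _).trans_lt hr) hr1).mono fun _ hx' => hcr.trans_le hx'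

theorem LowerSemicontinuous.eq_of_le_add {G : Type*} [AddGroup G] [TopologicalSpace G]
    [IsTopologicalAddGroup G] {α : G} {R : G → ℝ} (hR : LowerSemicontinuous R)
    (hα : Dense (range fun n : ℕ => n • α)) (hmono : ∀ x, R x ≤ R (x + α)) (x y : G) :
    R x = R y := by
  have hle : ∀ x (n : ℕ), R x ≤ R (x + n • α) := by
    intro x n
    induction n with
    | zero => simp
    | succ n ih => exact ih.trans ((hmono _).trans_eq (by rw [succ_nsmul, add_assoc]))
  have key : ∀ x y, R y ≤ R x := by
    intro x y
    refine le_of_forall_lt fun c hc => ?_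
    have hU : IsOpen {z | c < R (x - z)} :=
      (hR.isOpen_preimage c).preimage (continuous_const.sub continuous_id)
    obtain ⟨_, ⟨n, rfl⟩, hn⟩ := hα.exists_mem_open hU ⟨-y + x, by simpa [sub_eq_add_neg] using hc⟩
    simpa using hn.trans_le (hle (x - n • α) n)
  exact (key y x).antisymm (key x y)

theorem conformal_radius_constant_general {d : ℕ} (α : Torus d) (hα : RatIndep α)
    (f : Torus d → ℂ → ℂ) (𝒰 : Set (Torus d × ℂ))
    (hopen : IsOpen 𝒰)
    (hzero : ∀ θ : Torus d, (θ, (0:ℂ)) ∈ 𝒰)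
    (hhol : ∀ θ : Torus d, DifferentiableOn ℂ (f θ) {z : ℂ | (θ, z) ∈ 𝒰})
    (hfix : ∀ θ : Torus d, f θ 0 = 0)
    (hinv : ∀ p ∈ 𝒰, (p.1 + α, f p.1 p.2) ∈ 𝒰)
    (hone : ∀ θ : Torus d, ‖deriv (f θ) 0‖ = 1)
    (h : Torus d → ℂ → ℂ) (R : Torus d → ℝ)
    (hholh : ∀ θ : Torus d, DifferentiableOn ℂ (h θ) (ball (0:ℂ) 1))
    (hbij : ∀ θ : Torus d, Set.BijOn (h θ) (ball (0:ℂ) 1) {z : ℂ | (θ, z) ∈ 𝒰})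
    (hfixh : ∀ θ : Torus d, h θ 0 = 0)
    (hpos : ∀ θ : Torus d, 0 < R θ)
    (hR : ∀ θ : Torus d, deriv (h θ) 0 = (R θ : ℂ)) :
    ∀ θ θ' : Torus d, R θ = R θ' := by
  have hnormR : ∀ θ, ‖deriv (h θ) 0‖ = R θ := fun θ => by simp [hR, (hpos θ).le]
  have compare : ∀ θ {φ : ℂ → ℂ} {r : ℝ}, 0 < r → DifferentiableOn ℂ φ (ball 0 r) → φ 0 = 0 →
      MapsTo φ (ball 0 r) {z | (θ, z) ∈ 𝒰} → r * ‖deriv φ 0‖ ≤ R θ :=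
    fun θ _ _ hr hφ hφ0 hmaps => hnormR θ ▸
      Complex.mul_norm_deriv_le_of_mapsTo_image (hholh θ) (hbij θ).injOn (hfixh θ)
        (by simp [hR, (hpos θ).ne']) hr hφ hφ0 ((hbij θ).image_eq ▸ hmaps)
  have hmono : ∀ θ, R θ ≤ R (θ + α) := fun θ => by
    have hfθ := (hhol θ).differentiableAt
      ((hopen.preimage (.prodMk_right θ)).mem_nhds (hzero θ))
    have hhθ := (hholh θ).differentiableAt (isOpen_ball.mem_nhds (mem_ball_self one_pos))
    simpa [deriv_comp 0 (hfixh θ ▸ hfθ) hhθ, hfixh, hone, hnormR] using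
      compare (θ + α) one_pos ((hhol θ).comp (hholh θ) (hbij θ).mapsTo)
        (by simp [hfixh, hfix]) fun z hz => hinv _ ((hbij θ).mapsTo hz)
  have hlsc : LowerSemicontinuous R := lowerSemicontinuous_of_forall_mul_le hpos
    fun θ₀ r hr0 hr1 => by
      have hK : IsCompact (h θ₀ '' closedBall 0 r) :=
        (isCompact_closedBall 0 r).image_of_continuousOn
          ((hholh θ₀).continuousOn.mono (closedBall_subset_ball hr1))
      filter_upwards [hK.eventually_forall_of_forall_eventually (P := fun θ z => (θ, z) ∈ 𝒰)
        fun _ ⟨z, hz, hzw⟩ =>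
          hopen.mem_nhds (hzw ▸ (hbij θ₀).mapsTo (closedBall_subset_ball hr1 hz))]
        with θ hθ
      simpa [hnormR] using compare θ hr0 ((hholh θ₀).mono (ball_subset_ball hr1.le)) (hfixh θ₀)
        fun z hz => hθ _ (mem_image_of_mem _ (ball_subset_closedBall hz))
  exact hlsc.eq_of_le_add (by simpa using hα 0) hmono

/-- **The conformal radius of the fibers of an invariant tube is constant.**
For a fibered holomorphic dynamics with invariant zero section and `|∂_z f_θ(0)| = 1`, and a
bounded open invariant tube `𝒰` with simply connected fibers `𝒰_θ ∋ 0` uniformized by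
`h θ : 𝔻 → 𝒰_θ` (with `h θ 0 = 0`, `(h θ)'(0) = R θ > 0`), the conformal radius `R θ` does
not depend on `θ`. -/
theorem conformal_radius_constant {d : ℕ} (α : Torus d) (hα : RatIndep α)
    (f : Torus d → ℂ → ℂ) (𝒰 : Set (Torus d × ℂ))
    (hopen : IsOpen 𝒰)
    (hbdd : Bornology.IsBounded (Prod.snd '' 𝒰))
    (hzero : ∀ θ : Torus d, (θ, (0:ℂ)) ∈ 𝒰)
    (hcont : ContinuousOn (fun p : Torus d × ℂ => f p.1 p.2) 𝒰)
    (hhol : ∀ θ : Torus d, DifferentiableOn ℂ (f θ) {z : ℂ | (θ, z) ∈ 𝒰})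
    (hinj : Set.InjOn (fun p : Torus d × ℂ => (p.1 + α, f p.1 p.2)) 𝒰)
    (hfix : ∀ θ : Torus d, f θ 0 = 0)
    (hinv : ∀ p ∈ 𝒰, (p.1 + α, f p.1 p.2) ∈ 𝒰)
    (hone : ∀ θ : Torus d, ‖deriv (f θ) 0‖ = 1)
    (h : Torus d → ℂ → ℂ) (R : Torus d → ℝ)
    (hholh : ∀ θ : Torus d, DifferentiableOn ℂ (h θ) (ball (0:ℂ) 1))
    (hbij : ∀ θ : Torus d, Set.BijOn (h θ) (ball (0:ℂ) 1) {z : ℂ | (θ, z) ∈ 𝒰})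
    (hfixh : ∀ θ : Torus d, h θ 0 = 0)
    (hpos : ∀ θ : Torus d, 0 < R θ)
    (hR : ∀ θ : Torus d, deriv (h θ) 0 = (R θ : ℂ)) :
    ∀ θ θ' : Torus d, R θ = R θ' :=
  conformal_radius_constant_general α hα f 𝒰 hopen hzero hhol hfix hinv hone h R hholh hbij hfixh
    hpos hR
end

section
/- Let A ⊂ 𝕋¹ × ℂ be a compact set each of whose fibers A_θ = {z : (θ,z) ∈ A} is connected and nonempty. For each θ let Â_θ denote the filling of A_θ (the union of A_θ with the bounded connected components of its complement in ℂ). Then Â = ⋃_{θ∈𝕋¹} {θ} × Â_θ is compact. -/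
open Set Metric Bornology

lemma isConnected_norm_gt {R : ℝ} (hR : 0 ≤ R) : IsConnected {z : ℂ | R < ‖z‖} := by
  have h2 : (1 : Cardinal) < Module.rank ℝ ℂ := by
    rw [Complex.rank_real_complex]; exact Cardinal.one_lt_two
  have hsp : IsConnected (sphere (0:ℂ) 1) := isConnected_sphere h2 0 zero_le_one
  have hio : IsConnected (Ioi R) := isConnected_Ioi
  have hprod := hsp.prod hio
  have hc : Continuous (fun p : ℂ × ℝ => p.2 • p.1) := continuous_snd.smul continuous_fst
  have himg := hprod.image _ hc.continuousOn
  convert himg using 1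
  ext z
  simp only [mem_setOf_eq, mem_image, mem_prod, mem_sphere_iff_norm, sub_zero, mem_Ioi]
  constructor
  · intro hz
    have hz0 : ‖z‖ ≠ 0 := (hR.trans_lt hz).ne'
    refine ⟨(‖z‖⁻¹ • z, ‖z‖), ⟨?_, hz⟩, ?_⟩
    · rw [norm_smul, norm_inv, norm_norm, inv_mul_cancel₀ hz0]
    · rw [smul_smul, mul_inv_cancel₀ hz0, one_smul]
  · rintro ⟨⟨v, r⟩, ⟨hv, hr⟩, rfl⟩
    simp only [norm_smul, hv, mul_one, Real.norm_eq_abs]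
    rwa [abs_of_pos (hR.trans_lt hr)]

lemma not_isBounded_norm_gt (R : ℝ) : ¬ IsBounded {z : ℂ | R < ‖z‖} := by
  intro h
  obtain ⟨C, hC⟩ := (isBounded_iff_forall_norm_le).1 h
  have h1 : (↑(max R C + 1) : ℂ) ∈ {z : ℂ | R < ‖z‖} := by
    simp only [mem_setOf_eq, Complex.norm_real, Real.norm_eq_abs]
    have : R < max R C + 1 := lt_of_le_of_lt (le_max_left _ _) (lt_add_one _)
    exact this.trans_le (le_abs_self _)
  have h2 := hC _ h1
  rw [Complex.norm_real, Real.norm_eq_abs] at h2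
  have : C < max R C + 1 := lt_of_le_of_lt (le_max_right _ _) (lt_add_one _)
  exact absurd (le_trans (le_abs_self _) h2) (not_le.mpr this)

/-- The circle `𝕋¹ = ℝ/ℤ`. -/
abbrev Torus1 := AddCircle (1:ℝ)

/-- The filling of a set `K ⊆ ℂ`: the union of `K` with the bounded connected components of
its complement. -/
def fill (K : Set ℂ) : Set ℂ :=
  K ∪ {z : ℂ | z ∉ K ∧ Bornology.IsBounded (connectedComponentIn Kᶜ z)}

/-- **Fiberwise filling of a compact set is compact.**
If `A ⊆ 𝕋¹ × ℂ` is compact with all fibers nonempty and connected, then the set obtained by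
filling every fiber is compact. -/
theorem fiberwise_fill_isCompact (A : Set (Torus1 × ℂ))
    (hA : IsCompact A)
    (hne : ∀ θ : Torus1, {z : ℂ | (θ, z) ∈ A}.Nonempty)
    (hconn : ∀ θ : Torus1, IsConnected {z : ℂ | (θ, z) ∈ A}) :
    IsCompact {p : Torus1 × ℂ | p.2 ∈ fill {z : ℂ | (p.1, z) ∈ A}} := by
  classical
  set Ahat := {p : Torus1 × ℂ | p.2 ∈ fill {z : ℂ | (p.1, z) ∈ A}} with hAhatdef
  obtain ⟨R₀, hR₀⟩ := (isBounded_iff_forall_norm_le).1 (hA.image continuous_snd).isBounded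
  set R := max R₀ 0 with hRdef
  have hR0 : 0 ≤ R := le_max_right _ _
  have hRA : ∀ p ∈ A, ‖p.2‖ ≤ R := fun p hp => (hR₀ _ ⟨p, hp, rfl⟩).trans (le_max_left _ _)
  have hS : IsConnected {z : ℂ | R < ‖z‖} := isConnected_norm_gt hR0
  have hSunb := not_isBounded_norm_gt R
  have hfibcl : ∀ θ : Torus1, IsClosed {z : ℂ | (θ, z) ∈ A} := fun θ =>
    hA.isClosed.preimage (Continuous.prodMk_right θ)
  have hsub : Ahat ⊆ (univ : Set Torus1) ×ˢ closedBall (0:ℂ) R := by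
    rintro ⟨θ, z⟩ hp
    refine ⟨mem_univ _, ?_⟩
    rw [mem_closedBall, dist_zero_right]
    rcases hp with hzK | ⟨hzK, hb⟩
    · exact hRA _ hzK
    · by_contra hcon
      push_neg at hcon
      apply hSunb
      refine hb.subset (hS.isPreconnected.subset_connectedComponentIn hcon ?_)
      intro x hx hxK
      exact absurd (hRA _ hxK) (not_le.mpr hx)
  have hclosed : IsClosed Ahat := by
    rw [← isOpen_compl_iff, isOpen_iff_mem_nhds]
    rintro ⟨θ₀, z₀⟩ hp
    have hz₀K : z₀ ∉ {z : ℂ | (θ₀, z) ∈ A} := fun h => hp (Or.inl h)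
    have hz₀unb : ¬ IsBounded (connectedComponentIn {z : ℂ | (θ₀, z) ∈ A}ᶜ z₀) :=
      fun h => hp (Or.inr ⟨hz₀K, h⟩)
    set V := connectedComponentIn {z : ℂ | (θ₀, z) ∈ A}ᶜ z₀ with hVdef
    have hVopen : IsOpen V := (hfibcl θ₀).isOpen_compl.connectedComponentIn
    have hz₀V : z₀ ∈ V := mem_connectedComponentIn hz₀K
    have hVconn : IsConnected V := isConnected_connectedComponentIn_iff.mpr hz₀K
    obtain ⟨w, hwV, hwR⟩ : ∃ w ∈ V, R < ‖w‖ := by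
      by_contra hcon
      push_neg at hcon
      exact hz₀unb ((isBounded_iff_forall_norm_le).2 ⟨R, hcon⟩)
    have hpc : IsPathConnected V := hVopen.isConnected_iff_isPathConnected.mp hVconn
    obtain ⟨γ, hγ⟩ := hpc.joinedIn z₀ hz₀V w hwV
    obtain ⟨δ, hδpos, hδ⟩ := Metric.isOpen_iff.1 hVopen z₀ hz₀V
    set C : Set ℂ := range γ ∪ closedBall z₀ (δ/2) with hCdef
    have hCcomp : IsCompact C := (isCompact_range γ.continuous).union (isCompact_closedBall _ _)
    have hwC : w ∈ C := Or.inl ⟨1, γ.target⟩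
    have hCV : C ⊆ V := by
      rintro x (⟨t, rfl⟩ | hx)
      · exact hγ t
      · exact hδ (mem_ball.mpr (lt_of_le_of_lt (mem_closedBall.1 hx) (by linarith)))
    have hCconn : IsPreconnected C :=
      IsPreconnected.union z₀ ⟨0, γ.source⟩ (mem_closedBall_self (by positivity))
        (isConnected_range γ.continuous).isPreconnected
        (convex_closedBall z₀ (δ/2)).isPreconnected
    set T := Prod.fst '' (A ∩ (univ : Set Torus1) ×ˢ C) with hTdef
    have hTclosed : IsClosed T :=
      ((hA.inter_right (isClosed_univ.prod hCcomp.isClosed)).image continuous_fst).isClosed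
    have hθ₀T : θ₀ ∉ T := by
      rintro ⟨⟨θ, x⟩, ⟨hxA, -, hxC⟩, rfl⟩
      exact (connectedComponentIn_subset _ z₀) (hCV hxC) hxA
    refine Filter.mem_of_superset
      ((hTclosed.isOpen_compl.prod (isOpen_ball : IsOpen (ball z₀ (δ/2)))).mem_nhds
        ⟨hθ₀T, mem_ball_self (half_pos hδpos)⟩) ?_
    rintro ⟨θ, z⟩ ⟨hθ, hz⟩
    have hCK : ∀ x ∈ C, x ∉ {z : ℂ | (θ, z) ∈ A} :=
      fun x hx hxK => hθ ⟨(θ, x), ⟨hxK, mem_univ _, hx⟩, rfl⟩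
    have hzC : z ∈ C := Or.inr (ball_subset_closedBall hz)
    have hzK : z ∉ {z' : ℂ | (θ, z') ∈ A} := hCK z hzC
    have hsubset : C ∪ {x : ℂ | R < ‖x‖} ⊆ connectedComponentIn {z' : ℂ | (θ, z') ∈ A}ᶜ z := by
      refine IsPreconnected.subset_connectedComponentIn ?_ (Or.inl hzC) ?_
      · exact IsPreconnected.union w hwC hwR hCconn hS.isPreconnected
      · rintro x (hx | hx)
        · exact hCK x hx
        · intro hxK
          exact absurd (hRA _ hxK) (not_le.mpr hx)
    have hunb : ¬ IsBounded (connectedComponentIn {z' : ℂ | (θ, z') ∈ A}ᶜ z) := fun hb =>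
      hSunb (hb.subset (subset_trans subset_union_right hsubset))
    rintro (h | ⟨-, hb⟩)
    · exact hzK h
    · exact hunb hb
  exact ((isCompact_univ.prod (isCompact_closedBall (0:ℂ) R)).of_isClosed_subset hclosed hsub)
end

section
/- Let 𝒰 ⊂ 𝕋^d × ℂ be an open set whose fibers 𝒰_θ are simply connected domains containing 0, different from ℂ, uniformly bounded, with constant conformal radius at 0, and such that the closure of 𝒰_θ depends continuously on θ. Let θₙ → θ̃ in 𝕋^d. Then the sequence of domains 𝒰_{θₙ} converges in the sense of Carathéodory kernel convergence to 𝒰_{θ̃}: every subsequence of {𝒰_{θₙ}} has kernel equal to 𝒰_{θ̃}. -/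
/-!
Since `𝒰` is open, compact subsets of the limit fibre lie in the fibres over `θₙ` for large `n`;
in particular the limit fibre is contained in the kernel. Let `fₙ` invert the Riemann map `hₙ` of
the fibre over `θₙ` and `h` be the Riemann map of the limit fibre. Then `fₙ ∘ h` is defined on
ever larger disks, fixes `0` and has derivative `1` there because the conformal radii agree, so by
Schwarz–Pick it converges to the identity, locally uniformly on the unit disk.
A kernel point `z` lies in the closure of the limit fibre by the Hausdorff continuity of the
closures. Schwarz–Pick on a disk around `z`, compared with a nearby point of the limit fibre,
keeps `fₙ z` in a fixed compact subdisk, on which `fₙ ∘ h` is uniformly close to the identity and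
hence, by the open mapping theorem, attains the value `fₙ z` at some `v`. Then `z = h v`.
-/

open Metric Set Filter Topology TopologicalSpace

/-- The Carathéodory kernel (at `0`) of a sequence of sets: the union of `{0}` with all
points possessing a domain neighborhood contained in `O n` for all large `n`. -/
def caraKernel (O : ℕ → Set ℂ) : Set ℂ :=
  insert (0:ℂ) {z : ℂ | ∃ Ω : Set ℂ, IsOpen Ω ∧ IsConnected Ω ∧ z ∈ Ω ∧
    ∀ᶠ n in atTop, Ω ⊆ O n}

open ComplexConjugate
open Function (invFunOn)

theorem sq_norm_sq_sub_conj_mul (M : ℝ) (a b : ℂ) :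
    ‖(M : ℂ) ^ 2 - conj b * a‖ ^ 2 =
      M ^ 2 * ‖a - b‖ ^ 2 + (M ^ 2 - ‖a‖ ^ 2) * (M ^ 2 - ‖b‖ ^ 2) := by
  simp only [Complex.sq_norm, Complex.normSq_apply]
  simp only [pow_two, Complex.sub_re, Complex.sub_im, Complex.mul_re, Complex.mul_im,
    Complex.ofReal_re, Complex.ofReal_im, Complex.conj_re, Complex.conj_im]
  ring

theorem one_sub_sq_mul_sq_le_one_sub_sq_norm {a b : ℂ} {t : ℝ} (ha : ‖a‖ ≤ 1) (hb : ‖b‖ ≤ 1)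
    (ht : 0 ≤ t) (hab : ‖b - a‖ ≤ t * ‖1 - conj a * b‖) :
    (1 - t ^ 2) * (1 - ‖b‖) ^ 2 ≤ 1 - ‖a‖ ^ 2 := by
  have ha' : 0 ≤ 1 - ‖a‖ ^ 2 := by nlinarith [norm_nonneg a]
  rcases le_or_gt 1 t with h1 | h1
  · nlinarith [mul_nonpos_of_nonpos_of_nonneg (by nlinarith : 1 - t ^ 2 ≤ 0) (sq_nonneg (1 - ‖b‖))]
  have hid := sq_norm_sq_sub_conj_mul 1 b a
  simp only [Complex.ofReal_one, one_pow, one_mul] at hid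
  have hlow : 1 - ‖b‖ ≤ ‖1 - conj a * b‖ := by
    have := norm_sub_norm_le (1 : ℂ) (conj a * b)
    rw [norm_one, norm_mul, Complex.norm_conj] at this
    nlinarith [norm_nonneg a, norm_nonneg b]
  have hsq : ‖b - a‖ ^ 2 ≤ t ^ 2 * ‖1 - conj a * b‖ ^ 2 := by
    rw [← mul_pow]; exact pow_le_pow_left₀ (norm_nonneg _) hab 2
  have : (1 - t ^ 2) * (1 - ‖b‖) ^ 2 ≤ (1 - t ^ 2) * ‖1 - conj a * b‖ ^ 2 :=
    mul_le_mul_of_nonneg_left (pow_le_pow_left₀ (by linarith) hlow 2) (by nlinarith)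
  nlinarith [mul_nonneg ha' (sq_nonneg ‖b‖)]

theorem mul_norm_sub_le_of_mapsTo_closedBall {F : ℂ → ℂ} {c a : ℂ} {R M : ℝ}
    (hd : DifferentiableOn ℂ F (ball c R)) (hF : MapsTo F (ball c R) (closedBall 0 M))
    (hc : ‖F c‖ < M) (ha : a ∈ ball c R) :
    M * ‖F a - F c‖ ≤ dist a c / R * ‖(M : ℂ) ^ 2 - conj (F c) * F a‖ := by
  set b := F c
  have hM : 0 < M := (norm_nonneg _).trans_lt hc
  have hden : ∀ ζ ∈ ball c R, 0 < ‖(M : ℂ) ^ 2 - conj b * F ζ‖ := by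
    intro ζ hζ
    have hFζ : ‖F ζ‖ ≤ M := mem_closedBall_zero_iff.1 (hF hζ)
    have := norm_sub_norm_le ((M : ℂ) ^ 2) (conj b * F ζ)
    rw [norm_mul, Complex.norm_conj, norm_pow, Complex.norm_real, Real.norm_of_nonneg hM.le] at this
    nlinarith [mul_le_mul_of_nonneg_left hFζ (norm_nonneg b)]
  have hmob : ∀ ζ ∈ ball c R, M * ‖F ζ - b‖ ≤ ‖(M : ℂ) ^ 2 - conj b * F ζ‖ := by
    intro ζ hζ
    have hFζ : ‖F ζ‖ ≤ M := mem_closedBall_zero_iff.1 (hF hζ)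
    have hid := sq_norm_sq_sub_conj_mul M (F ζ) b
    refine (pow_le_pow_iff_left₀ (by positivity) (norm_nonneg _) two_ne_zero).1 ?_
    nlinarith [mul_nonneg (sub_nonneg.2 (pow_le_pow_left₀ (norm_nonneg _) hFζ 2))
      (sub_nonneg.2 (pow_le_pow_left₀ (norm_nonneg _) hc.le 2))]
  -- compose `F` with the automorphism of `closedBall 0 M` sending `F c` to `0`
  set G := fun ζ => M * (F ζ - b) / ((M : ℂ) ^ 2 - conj b * F ζ)
  have hnormG : ∀ ζ ∈ ball c R,
      ‖G ζ‖ = M * ‖F ζ - b‖ / ‖(M : ℂ) ^ 2 - conj b * F ζ‖ := by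
    intro ζ _
    simp only [G, norm_div, norm_mul, Complex.norm_real, Real.norm_of_nonneg hM.le]
  have hGd : DifferentiableOn ℂ G (ball c R) :=
    ((differentiableOn_const _).mul (hd.sub_const b)).div
      ((differentiableOn_const _).sub ((differentiableOn_const _).mul hd))
      fun ζ hζ => norm_pos_iff.1 (hden ζ hζ)
  have hGc : G c = 0 := by simp [G, b]
  have hGmaps : MapsTo G (ball c R) (closedBall (G c) 1) := by
    intro ζ hζ
    rw [hGc, mem_closedBall_zero_iff, hnormG ζ hζ, div_le_one (hden ζ hζ)]
    exact hmob ζ hζ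
  have hschwarz := Complex.dist_le_div_mul_dist_of_mapsTo_ball hGd hGmaps ha
  rw [hGc, dist_zero_right, hnormG a ha, div_le_iff₀ (hden a ha)] at hschwarz
  calc M * ‖F a - b‖ ≤ 1 / R * dist a c * ‖(M : ℂ) ^ 2 - conj b * F a‖ := hschwarz
    _ = dist a c / R * ‖(M : ℂ) ^ 2 - conj b * F a‖ := by ring

structure IsNormalizedDiskMap (g : ℂ → ℂ) (ρ : ℝ) : Prop where
  differentiableOn : DifferentiableOn ℂ g (ball 0 ρ)
  mapsTo : MapsTo g (ball 0 ρ) (closedBall 0 1)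
  map_zero : g 0 = 0
  deriv_zero : deriv g 0 = 1

theorem IsNormalizedDiskMap.norm_apply_sub_le {g : ℂ → ℂ} {ρ s : ℝ} (hg : IsNormalizedDiskMap g ρ)
    (hρ : ρ < 1) {v : ℂ} (hv : ‖v‖ ≤ s) (hs : s < ρ) :
    ‖g v - v‖ ≤ s ^ 2 * (ρ⁻¹ ^ 2 - 1) / (1 - s) := by
  have hρ0 : 0 < ρ := (norm_nonneg v).trans_lt (hv.trans_lt hs)
  have hρinv : 1 < ρ⁻¹ := one_lt_inv₀ hρ0 |>.2 hρ
  have hvb : v ∈ ball (0 : ℂ) ρ := mem_ball_zero_iff.2 (hv.trans_lt hs)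
  -- Schwarz–Pick applied to the slope `g v / v`, which equals `1` at `0`
  set φ := dslope g 0 with hφ
  have hφd : DifferentiableOn ℂ φ (ball 0 ρ) :=
    (Complex.differentiableOn_dslope (ball_mem_nhds 0 hρ0)).2 hg.differentiableOn
  have hφm : MapsTo φ (ball 0 ρ) (closedBall 0 ρ⁻¹) := fun x hx => by
    have := Complex.norm_dslope_le_div_of_mapsTo_ball hg.differentiableOn
      (by rw [hg.map_zero]; exact hg.mapsTo) hx
    rwa [one_div, ← mem_closedBall_zero_iff] at this
  have hφ0 : φ 0 = 1 := by rw [hφ, dslope_same, hg.deriv_zero]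
  have hSP := mul_norm_sub_le_of_mapsTo_closedBall hφd hφm (by rwa [hφ0, norm_one]) hvb
  rw [hφ0, map_one, one_mul, dist_zero_right] at hSP
  set X := ‖φ v - 1‖
  have htri : ‖((ρ⁻¹ : ℝ) : ℂ) ^ 2 - φ v‖ ≤ (ρ⁻¹ ^ 2 - 1) + X := by
    have : ((ρ⁻¹ : ℝ) : ℂ) ^ 2 - φ v = ((ρ⁻¹ ^ 2 - 1 : ℝ) : ℂ) - (φ v - 1) := by push_cast; ring
    rw [this]
    refine (norm_sub_le _ _).trans_eq ?_
    rw [Complex.norm_real, Real.norm_of_nonneg (by nlinarith)]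
  have hX : X * (1 - ‖v‖) ≤ ‖v‖ * (ρ⁻¹ ^ 2 - 1) := by
    have := mul_le_mul_of_nonneg_left hSP hρ0.le
    rw [← mul_assoc, mul_inv_cancel₀ hρ0.ne', one_mul, ← mul_assoc,
      mul_div_cancel₀ _ hρ0.ne'] at this
    nlinarith [mul_le_mul_of_nonneg_left htri (norm_nonneg v)]
  have hgv : g v - v = v * (φ v - 1) := by
    rcases eq_or_ne v 0 with rfl | hv0
    · simp [hg.map_zero]
    · rw [hφ, dslope_of_ne _ hv0, slope_def_field, hg.map_zero]
      field_simp
      ring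
  rw [hgv, norm_mul, le_div_iff₀ (by linarith)]
  have hX0 : 0 ≤ X := norm_nonneg _
  have hv0 : 0 ≤ ‖v‖ := norm_nonneg _
  have hρ2 : 0 ≤ ρ⁻¹ ^ 2 - 1 := by nlinarith
  calc ‖v‖ * X * (1 - s) ≤ ‖v‖ * (X * (1 - ‖v‖)) := by nlinarith [mul_nonneg hv0 hX0]
    _ ≤ ‖v‖ * (‖v‖ * (ρ⁻¹ ^ 2 - 1)) := mul_le_mul_of_nonneg_left hX hv0
    _ ≤ s ^ 2 * (ρ⁻¹ ^ 2 - 1) := by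
      rw [← mul_assoc, ← pow_two]
      exact mul_le_mul_of_nonneg_right (pow_le_pow_left₀ hv0 hv 2) hρ2

theorem eventually_norm_apply_sub_le {g : ℕ → ℂ → ℂ}
    (hg : ∀ ρ < 1, ∀ᶠ n in atTop, IsNormalizedDiskMap (g n) ρ) {s ε : ℝ} (hs : s < 1)
    (hε : 0 < ε) : ∀ᶠ n in atTop, ∀ v ∈ closedBall (0 : ℂ) s, ‖g n v - v‖ ≤ ε := by
  have hlim : Tendsto (fun ρ : ℝ => s ^ 2 * (ρ⁻¹ ^ 2 - 1) / (1 - s)) (𝓝[<] 1) (𝓝 0) := by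
    have : ContinuousAt (fun ρ : ℝ => s ^ 2 * (ρ⁻¹ ^ 2 - 1) / (1 - s)) 1 := by
      fun_prop (disch := norm_num)
    simpa using this.tendsto.mono_left nhdsWithin_le_nhds
  obtain ⟨ρ, hρε, hρ⟩ := ((hlim.eventually (ge_mem_nhds hε)).and (Ioo_mem_nhdsLT hs)).exists
  filter_upwards [hg ρ hρ.2] with n hn v hv
  exact (hn.norm_apply_sub_le hρ.2 (mem_closedBall_zero_iff.1 hv) hρ.1).trans hρε

theorem mul_sq_le_one_sub_sq_norm_of_mapsTo_ball {F : ℂ → ℂ} {z z' : ℂ} {r : ℝ}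
    (hd : DifferentiableOn ℂ F (ball z r)) (hF : MapsTo F (ball z r) (ball 0 1))
    (hz' : z' ∈ ball z r) :
    (1 - (dist z' z / r) ^ 2) * (1 - ‖F z'‖) ^ 2 ≤ 1 - ‖F z‖ ^ 2 := by
  have hz : ‖F z‖ < 1 := mem_ball_zero_iff.1 (hF (mem_ball_self (pos_of_mem_ball hz')))
  have hSP := mul_norm_sub_le_of_mapsTo_closedBall hd (hF.mono_right ball_subset_closedBall)
    hz hz'
  simp only [Complex.ofReal_one, one_pow, one_mul] at hSP
  exact one_sub_sq_mul_sq_le_one_sub_sq_norm hz.le (mem_ball_zero_iff.1 (hF hz')).le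
    (div_nonneg dist_nonneg (pos_of_mem_ball hz').le) hSP

theorem mem_image_closedBall_of_norm_apply_sub_le {g : ℂ → ℂ} {p : ℂ} {r ε : ℝ}
    (hg : DiffContOnCl ℂ g (ball p r)) (hε : 0 ≤ ε) (hεr : 4 * ε < r)
    (hclose : ∀ v ∈ closedBall p r, ‖g v - v‖ ≤ ε) : p ∈ g '' closedBall p r := by
  have hr : 0 < r := by linarith
  have hgp : ‖g p - p‖ ≤ ε := hclose p (mem_closedBall_self hr.le)
  have hsphere : ∀ v ∈ sphere p r, r - 2 * ε ≤ ‖g v - g p‖ := by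
    intro v hv
    have hvp : ‖v - p‖ = r := by rw [← dist_eq_norm]; exact mem_sphere.1 hv
    have hgv := hclose v (sphere_subset_closedBall hv)
    have key : r ≤ ‖g v - g p‖ + ‖g v - v‖ + ‖g p - p‖ :=
      calc r = ‖(g v - g p) - (g v - v) + (g p - p)‖ := by rw [← hvp]; congr 1; ring
        _ ≤ ‖g v - g p‖ + ‖g v - v‖ + ‖g p - p‖ :=
          (norm_add_le _ _).trans (add_le_add_left (norm_sub_le _ _) _)
    linarith
  have hnc : ∃ᶠ v in 𝓝 p, g v ≠ g p := by
    refine not_eventually.1 fun hconst => ?_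
    have heq := (hg.differentiableOn.analyticOnNhd isOpen_ball).eqOn_of_preconnected_of_eventuallyEq
      analyticOnNhd_const (convex_ball p r).isPreconnected (mem_ball_self hr) hconst
    have hv : p + ((r / 2 : ℝ) : ℂ) ∈ ball p r := by
      rw [mem_ball, dist_eq_norm, add_sub_cancel_left, Complex.norm_real,
        Real.norm_of_nonneg (by positivity)]
      linarith
    have h1 := hclose _ (ball_subset_closedBall hv)
    rw [heq hv] at h1
    have : ((r / 2 : ℝ) : ℂ) = (g p - p) - (g p - (p + ((r / 2 : ℝ) : ℂ))) := by ring
    have h2 := norm_sub_le (g p - p) (g p - (p + ((r / 2 : ℝ) : ℂ)))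
    rw [← this, Complex.norm_real, Real.norm_of_nonneg (by positivity)] at h2
    linarith
  refine hg.ball_subset_image_closedBall hr hsphere hnc (mem_ball.2 ?_)
  rw [dist_comm, dist_eq_norm]
  linarith

section InverseFunction

variable {h : ℂ → ℂ} {D : Set ℂ} {w : ℂ}

theorem not_eventually_eq_of_injOn (hinj : InjOn h D) (hD : D ∈ 𝓝 w) :
    ¬∀ᶠ v in 𝓝 w, h v = h w := fun hconst => by
  obtain ⟨v, ⟨hv, hvD⟩, hvw⟩ :=
    (((hconst.and hD).filter_mono nhdsWithin_le_nhds).and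
      (self_mem_nhdsWithin : {w}ᶜ ∈ 𝓝[≠] w)).exists
  exact hvw (hinj hvD (mem_of_mem_nhds hD) hv)

theorem nhds_le_map_nhds_of_injOn (hD : IsOpen D) (hd : DifferentiableOn ℂ h D)
    (hinj : InjOn h D) (hw : w ∈ D) : 𝓝 (h w) ≤ map h (𝓝 w) :=
  (hd.analyticAt (hD.mem_nhds hw)).eventually_constant_or_nhds_le_map_nhds_aux.resolve_left
    (not_eventually_eq_of_injOn hinj (hD.mem_nhds hw))

theorem image_mem_nhds_of_injOn (hD : IsOpen D) (hd : DifferentiableOn ℂ h D)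
    (hinj : InjOn h D) (hw : w ∈ D) : h '' D ∈ 𝓝 (h w) :=
  nhds_le_map_nhds_of_injOn hD hd hinj hw (image_mem_map (hD.mem_nhds hw))

theorem eventually_deriv_ne_zero_of_injOn (hD : IsOpen D) (hd : DifferentiableOn ℂ h D)
    (hinj : InjOn h D) (hw : w ∈ D) : ∀ᶠ v in 𝓝[≠] w, deriv h v ≠ 0 := by
  refine (hd.analyticAt (hD.mem_nhds hw)).deriv.eventually_eq_zero_or_eventually_ne_zero
    |>.resolve_left fun hzero => not_eventually_eq_of_injOn hinj (hD.mem_nhds hw) ?_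
  obtain ⟨δ, hδ, hball⟩ := Metric.eventually_nhds_iff_ball.1 (hzero.and (hD.eventually_mem hw))
  filter_upwards [ball_mem_nhds w hδ] with v hv
  exact isOpen_ball.is_const_of_deriv_eq_zero (convex_ball w δ).isPreconnected
    (hd.mono fun y hy => (hball y hy).2) (fun y hy => (hball y hy).1) hv (mem_ball_self hδ)

theorem continuousAt_invFunOn_of_injOn (hD : IsOpen D) (hd : DifferentiableOn ℂ h D)
    (hinj : InjOn h D) (hw : w ∈ D) : ContinuousAt (invFunOn h D) (h w) := by
  rw [ContinuousAt, hinj.leftInvOn_invFunOn hw]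
  intro N hN
  have himage : h '' (N ∩ D) ∈ 𝓝 (h w) :=
    nhds_le_map_nhds_of_injOn hD hd hinj hw (image_mem_map (inter_mem hN (hD.mem_nhds hw)))
  refine mem_map.2 (mem_of_superset himage ?_)
  rintro _ ⟨v, ⟨hvN, hvD⟩, rfl⟩
  rwa [mem_preimage, hinj.leftInvOn_invFunOn hvD]

theorem differentiableOn_invFunOn_image (hD : IsOpen D) (hd : DifferentiableOn ℂ h D)
    (hinj : InjOn h D) : DifferentiableOn ℂ (invFunOn h D) (h '' D) := by
  rintro _ ⟨w, hw, rfl⟩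
  obtain ⟨δ, hδ, hball⟩ := Metric.eventually_nhds_iff_ball.1
    ((eventually_nhdsWithin_iff.1 (eventually_deriv_ne_zero_of_injOn hD hd hinj hw)).and
      (hD.eventually_mem hw))
  have hS : h '' ball w δ ∈ 𝓝 (h w) :=
    nhds_le_map_nhds_of_injOn hD hd hinj hw (image_mem_map (ball_mem_nhds w hδ))
  -- off the isolated critical point `w` the local inverse theorem applies; `w` is removable
  refine (((Complex.differentiableOn_compl_singleton_and_continuousAt_iff hS).1
    ⟨?_, continuousAt_invFunOn_of_injOn hD hd hinj hw⟩).differentiableAt hS).differentiableWithinAt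
  rintro _ ⟨⟨v, hv, rfl⟩, hvw⟩
  have hvD := (hball v hv).2
  have hne : v ≠ w := by rintro rfl; exact hvw rfl
  have hderiv : HasDerivAt h (deriv h v) (invFunOn h D (h v)) := by
    rw [hinj.leftInvOn_invFunOn hvD]
    exact (hd.differentiableAt (hD.mem_nhds hvD)).hasDerivAt
  refine (hderiv.of_local_left_inverse (continuousAt_invFunOn_of_injOn hD hd hinj hvD)
    ((hball v hv).1 hne) ?_).differentiableAt.differentiableWithinAt
  filter_upwards [image_mem_nhds_of_injOn hD hd hinj hvD] with y hy
  exact (surjOn_image h D).rightInvOn_invFunOn hy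

theorem deriv_invFunOn_mul_deriv (hD : IsOpen D) (hd : DifferentiableOn ℂ h D)
    (hinj : InjOn h D) (hw : w ∈ D) : deriv (invFunOn h D) (h w) * deriv h w = 1 := by
  have hcomp : HasDerivAt (invFunOn h D ∘ h) (deriv (invFunOn h D) (h w) * deriv h w) w :=
    ((differentiableOn_invFunOn_image hD hd hinj).differentiableAt
      (image_mem_nhds_of_injOn hD hd hinj hw)).hasDerivAt.comp w
      (hd.differentiableAt (hD.mem_nhds hw)).hasDerivAt
  have hid : HasDerivAt (invFunOn h D ∘ h) 1 w := by
    refine (hasDerivAt_id w).congr_of_eventuallyEq ?_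
    filter_upwards [hD.mem_nhds hw] with v hv
    exact hinj.leftInvOn_invFunOn hv
  exact hcomp.unique hid

end InverseFunction

theorem isNormalizedDiskMap_invFunOn_comp {H h : ℂ → ℂ} {ρ : ℝ}
    (hH : DifferentiableOn ℂ H (ball 0 1)) (hHinj : InjOn H (ball 0 1)) (hH0 : H 0 = 0)
    (hh : DifferentiableOn ℂ h (ball 0 1)) (hh0 : h 0 = 0) (hderiv : deriv H 0 = deriv h 0)
    (hρ : ρ ≤ 1) (hsub : h '' ball 0 ρ ⊆ H '' ball 0 1) :
    IsNormalizedDiskMap (invFunOn H (ball 0 1) ∘ h) ρ := by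
  have h0 : (0 : ℂ) ∈ ball 0 1 := mem_ball_self one_pos
  have hinv := differentiableOn_invFunOn_image isOpen_ball hH hHinj
  refine ⟨hinv.comp (hh.mono (ball_subset_ball hρ)) fun v hv => hsub (mem_image_of_mem h hv),
    fun v hv => ball_subset_closedBall
      ((surjOn_image H (ball 0 1)).mapsTo_invFunOn (hsub (mem_image_of_mem h hv))), ?_, ?_⟩
  · have := hHinj.leftInvOn_invFunOn h0
    rw [hH0] at this
    rw [Function.comp_apply, hh0, this]
  · have hinv0 := image_mem_nhds_of_injOn isOpen_ball hH hHinj h0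
    have hmul := deriv_invFunOn_mul_deriv isOpen_ball hH hHinj h0
    rw [hH0] at hinv0 hmul
    rw [deriv_comp _ _ (hh.differentiableAt (ball_mem_nhds 0 one_pos)), hh0, ← hderiv, hmul]
    rw [hh0]
    exact hinv.differentiableAt hinv0

theorem exists_eventually_norm_apply_le {f : ℕ → ℂ → ℂ} {h : ℂ → ℂ} {V : ℕ → Set ℂ}
    (hf : ∀ n, DifferentiableOn ℂ (f n) (V n)) (hfV : ∀ n, MapsTo (f n) (V n) (ball 0 1))
    (hg : ∀ ρ < 1, ∀ᶠ n in atTop, IsNormalizedDiskMap (f n ∘ h) ρ) {z : ℂ} {r : ℝ}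
    (hz : z ∈ closure (h '' ball 0 1)) (hr : 0 < r) (hzr : ∀ᶠ n in atTop, ball z r ⊆ V n) :
    ∃ γ < 1, ∀ᶠ n in atTop, ‖f n z‖ ≤ γ := by
  obtain ⟨_, ⟨w, hw, rfl⟩, hzw⟩ := Metric.mem_closure_iff.1 hz (r / 2) (half_pos hr)
  have hw1 : ‖w‖ < 1 := mem_ball_zero_iff.1 hw
  set β := (1 + ‖w‖) / 2 with hβ
  have hβ1 : β < 1 := by rw [hβ]; linarith
  refine ⟨1 - 3 / 8 * (1 - β) ^ 2, by nlinarith [pow_pos (sub_pos.2 hβ1) 2], ?_⟩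
  filter_upwards [eventually_norm_apply_sub_le hg hw1 (ε := (1 - ‖w‖) / 2) (by linarith), hzr]
    with n hn hball
  have hfw : ‖f n (h w)‖ ≤ β := by
    have := hn w (mem_closedBall_zero_iff.2 le_rfl)
    have := norm_le_norm_add_norm_sub' (f n (h w)) w
    rw [Function.comp_apply] at *
    linarith
  have hmem : h w ∈ ball z r := by rw [mem_ball, dist_comm]; linarith
  -- Schwarz–Pick on `ball z r` transfers the bound from `f n (h w)` to `f n z`
  have key := mul_sq_le_one_sub_sq_norm_of_mapsTo_ball ((hf n).mono hball)
    ((hfV n).mono_left hball) hmem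
  have ht : (dist (h w) z / r) ^ 2 ≤ 1 / 4 := by
    rw [div_pow, div_le_iff₀ (by positivity), dist_comm]
    nlinarith [dist_nonneg (x := z) (y := h w)]
  have hfw2 : (1 - β) ^ 2 ≤ (1 - ‖f n (h w)‖) ^ 2 :=
    pow_le_pow_left₀ (by linarith) (by linarith) 2
  have hfz : 3 / 4 * (1 - β) ^ 2 ≤ 1 - ‖f n z‖ ^ 2 := by
    nlinarith [mul_le_mul hfw2 (by linarith : 3 / 4 ≤ 1 - (dist (h w) z / r) ^ 2) (by norm_num)
      (sq_nonneg _)]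
  refine (pow_le_pow_iff_left₀ (norm_nonneg _) (by nlinarith) two_ne_zero).1 ?_
  nlinarith

theorem mem_image_of_eventually_ball_subset_image {H : ℕ → ℂ → ℂ} {h : ℂ → ℂ}
    (hH : ∀ n, DifferentiableOn ℂ (H n) (ball 0 1)) (hHinj : ∀ n, InjOn (H n) (ball 0 1))
    (hH0 : ∀ n, H n 0 = 0) (hh : DifferentiableOn ℂ h (ball 0 1)) (hh0 : h 0 = 0)
    (hderiv : ∀ n, deriv (H n) 0 = deriv h 0)
    (hcpt : ∀ ρ < 1, ∀ᶠ n in atTop, h '' ball 0 ρ ⊆ H n '' ball 0 1)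
    {z : ℂ} {r : ℝ} (hz : z ∈ closure (h '' ball 0 1)) (hr : 0 < r)
    (hzr : ∀ᶠ n in atTop, ball z r ⊆ H n '' ball 0 1) : z ∈ h '' ball 0 1 := by
  set f := fun n => invFunOn (H n) (ball 0 1)
  have hg : ∀ ρ < 1, ∀ᶠ n in atTop, IsNormalizedDiskMap (f n ∘ h) ρ := fun ρ hρ =>
    (hcpt ρ hρ).mono fun n hn =>
      isNormalizedDiskMap_invFunOn_comp (hH n) (hHinj n) (hH0 n) hh hh0 (hderiv n) hρ.le hn
  have hright : ∀ n, RightInvOn (f n) (H n) (H n '' ball 0 1) := fun n =>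
    (surjOn_image _ _).rightInvOn_invFunOn
  obtain ⟨γ, hγ1, hγ⟩ := exists_eventually_norm_apply_le
    (fun n => differentiableOn_invFunOn_image isOpen_ball (hH n) (hHinj n))
    (fun n => (surjOn_image _ _).mapsTo_invFunOn) hg hz hr hzr
  set s := (1 + γ) / 2 with hs
  set ρ := (3 + γ) / 4 with hρ
  have hsρ : s < ρ := by linarith
  have hρ1 : ρ < 1 := by linarith
  obtain ⟨n, hgn, hρn, hclose, hzn, hzγ⟩ := ((hg ρ hρ1).and ((hcpt ρ hρ1).and
    ((eventually_norm_apply_sub_le hg (hsρ.trans hρ1) (ε := (1 - γ) / 16) (by linarith)).and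
      (hzr.and hγ)))).exists
  have hsub : closedBall (f n z) ((1 - γ) / 2) ⊆ closedBall 0 s :=
    closedBall_subset_closedBall' (by rw [dist_zero_right]; linarith)
  obtain ⟨v, hv, hfv⟩ := mem_image_closedBall_of_norm_apply_sub_le
    (hgn.differentiableOn.diffContOnCl_ball (hsub.trans (closedBall_subset_ball hsρ)))
    (by linarith) (by linarith) fun v hv => hclose v (hsub hv)
  have hvρ : v ∈ ball (0 : ℂ) ρ := closedBall_subset_ball hsρ (hsub hv)
  refine ⟨v, ball_subset_ball hρ1.le hvρ, ?_⟩
  calc h v = H n (f n (h v)) := (hright n (hρn (mem_image_of_mem h hvρ))).symm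
    _ = H n (f n z) := congrArg (H n) hfv
    _ = z := hright n (hzn (mem_ball_self hr))

theorem caraKernel_subset_image {H : ℕ → ℂ → ℂ} {h : ℂ → ℂ}
    (hH : ∀ n, DifferentiableOn ℂ (H n) (ball 0 1)) (hHinj : ∀ n, InjOn (H n) (ball 0 1))
    (hH0 : ∀ n, H n 0 = 0) (hh : DifferentiableOn ℂ h (ball 0 1)) (hh0 : h 0 = 0)
    (hderiv : ∀ n, deriv (H n) 0 = deriv h 0)
    (hcpt : ∀ ρ < 1, ∀ᶠ n in atTop, h '' ball 0 ρ ⊆ H n '' ball 0 1)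
    (hclosure : ∀ z, (∀ᶠ n in atTop, z ∈ H n '' ball 0 1) → z ∈ closure (h '' ball 0 1)) :
    caraKernel (fun n => H n '' ball 0 1) ⊆ h '' ball 0 1 := by
  rintro z (rfl | ⟨Ω, hΩ, -, hzΩ, hΩU⟩)
  · exact ⟨0, mem_ball_self one_pos, hh0⟩
  obtain ⟨r, hr, hrΩ⟩ := Metric.isOpen_iff.1 hΩ z hzΩ
  have hzr : ∀ᶠ n in atTop, ball z r ⊆ H n '' ball 0 1 := hΩU.mono fun n hn => hrΩ.trans hn
  exact mem_image_of_eventually_ball_subset_image hH hHinj hH0 hh hh0 hderiv hcpt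
    (hclosure z (hzr.mono fun n hn => hn (mem_ball_self hr))) hr hzr

theorem eventually_subset_fiber {X Y : Type*} [TopologicalSpace X] [TopologicalSpace Y]
    {s : Set (X × Y)} (hs : IsOpen s) {E : Set Y} (hE : IsCompact E) {x : X}
    (hEx : E ⊆ {y | (x, y) ∈ s}) : ∀ᶠ x' in 𝓝 x, E ⊆ {y | (x', y) ∈ s} :=
  hE.eventually_forall_of_forall_eventually (P := fun x' y => (x', y) ∈ s)
    fun _ hy => hs.mem_nhds (hEx hy)

theorem TopologicalSpace.NonemptyCompacts.mem_of_tendsto {α ι : Type*} [MetricSpace α]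
    {l : Filter ι} [l.NeBot] {K : ι → NonemptyCompacts α} {L : NonemptyCompacts α}
    (hK : Tendsto K l (𝓝 L)) {z : α} (hz : ∀ᶠ i in l, z ∈ K i) : z ∈ L := by
  refine (L.isCompact.isClosed.mem_iff_infDist_zero L.nonempty).2
    (le_antisymm (ge_of_tendsto (tendsto_iff_dist_tendsto_zero.1 hK) ?_) infDist_nonneg)
  filter_upwards [hz] with i hi
  calc infDist z L ≤ infDist z (K i) + hausdorffDist (K i : Set α) L :=
        infDist_le_infDist_add_hausdorffDist (hausdorffEDist_ne_top_of_nonempty_of_bounded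
          (K i).nonempty L.nonempty (K i).isCompact.isBounded L.isCompact.isBounded)
    _ = dist (K i) L := by rw [infDist_zero_of_mem hi, zero_add, NonemptyCompacts.dist_eq]

theorem fibers_kernel_convergence_general {d : ℕ} (𝒰 : Set (Torus d × ℂ))
    (hopen : IsOpen 𝒰)
    (h : Torus d → ℂ → ℂ) (c : ℝ)
    (hhol : ∀ θ : Torus d, DifferentiableOn ℂ (h θ) (ball (0:ℂ) 1))
    (hbij : ∀ θ : Torus d, Set.BijOn (h θ) (ball (0:ℂ) 1) {z : ℂ | (θ, z) ∈ 𝒰})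
    (hfix : ∀ θ : Torus d, h θ 0 = 0)
    (hR : ∀ θ : Torus d, deriv (h θ) 0 = (c : ℂ))
    (K : Torus d → NonemptyCompacts ℂ)
    (hK : ∀ θ : Torus d, (K θ : Set ℂ) = closure {z : ℂ | (θ, z) ∈ 𝒰})
    (hKcont : Continuous K)
    (θseq : ℕ → Torus d) (θt : Torus d)
    (hθ : Tendsto θseq atTop (𝓝 θt)) :
    ∀ φ : ℕ → ℕ, StrictMono φ →
      caraKernel (fun n => {z : ℂ | (θseq (φ n), z) ∈ 𝒰}) = {z : ℂ | (θt, z) ∈ 𝒰} := by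
  intro φ hφ
  have hθφ : Tendsto (fun n => θseq (φ n)) atTop (𝓝 θt) := hθ.comp hφ.tendsto_atTop
  have himage : ∀ θ, h θ '' ball 0 1 = {z | (θ, z) ∈ 𝒰} := fun θ => (hbij θ).image_eq
  refine Subset.antisymm ?_ fun z hz => ?_
  · simp only [← himage]
    refine caraKernel_subset_image (fun _ => hhol _) (fun _ => (hbij _).injOn) (fun _ => hfix _)
      (hhol θt) (hfix θt) (fun _ => by rw [hR, hR]) (fun ρ hρ => ?_) fun z hz => ?_
    · have hE := (isCompact_closedBall (0 : ℂ) ρ).image_of_continuousOn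
        ((hhol θt).continuousOn.mono (closedBall_subset_ball hρ))
      filter_upwards [hθφ.eventually (eventually_subset_fiber hopen hE
        (himage θt ▸ image_mono (closedBall_subset_ball hρ)))] with n hn
      rw [himage]
      exact (image_mono ball_subset_closedBall).trans hn
    · rw [himage, ← hK]
      refine NonemptyCompacts.mem_of_tendsto ((hKcont.tendsto θt).comp hθφ) (hz.mono fun n hn => ?_)
      rw [Function.comp_apply, ← SetLike.mem_coe, hK, ← himage]
      exact subset_closure hn
  · obtain ⟨r, hr, hrU⟩ := nhds_basis_closedBall.mem_iff.1
      ((hopen.preimage (Continuous.prodMk_right θt)).mem_nhds hz)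
    refine Or.inr ⟨ball z r, isOpen_ball, (convex_ball z r).isConnected (nonempty_ball.2 hr),
      mem_ball_self hr, ?_⟩
    filter_upwards [hθφ.eventually (eventually_subset_fiber hopen (isCompact_closedBall z r) hrU)]
      with n hn
    exact ball_subset_closedBall.trans hn

/-- **Kernel convergence of the fibers of an invariant tube.**
If the fibers `𝒰_θ` are uniformly bounded simply connected domains containing `0`, with
constant conformal radius at `0` and closures depending continuously on `θ` (Hausdorff
distance), then `θₙ → θ̃` implies the fibers `𝒰_{θₙ}` kernel converge to `𝒰_{θ̃}`:
every subsequence has kernel `𝒰_{θ̃}`. -/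
theorem fibers_kernel_convergence {d : ℕ} (𝒰 : Set (Torus d × ℂ))
    (hopen : IsOpen 𝒰)
    (hbdd : Bornology.IsBounded (Prod.snd '' 𝒰))
    (hzero : ∀ θ : Torus d, (θ, (0:ℂ)) ∈ 𝒰)
    (hne : ∀ θ : Torus d, {z : ℂ | (θ, z) ∈ 𝒰} ≠ Set.univ)
    (h : Torus d → ℂ → ℂ) (c : ℝ) (hc : 0 < c)
    (hhol : ∀ θ : Torus d, DifferentiableOn ℂ (h θ) (ball (0:ℂ) 1))
    (hbij : ∀ θ : Torus d, Set.BijOn (h θ) (ball (0:ℂ) 1) {z : ℂ | (θ, z) ∈ 𝒰})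
    (hfix : ∀ θ : Torus d, h θ 0 = 0)
    (hR : ∀ θ : Torus d, deriv (h θ) 0 = (c : ℂ))
    (K : Torus d → NonemptyCompacts ℂ)
    (hK : ∀ θ : Torus d, (K θ : Set ℂ) = closure {z : ℂ | (θ, z) ∈ 𝒰})
    (hKcont : Continuous K)
    (θseq : ℕ → Torus d) (θt : Torus d)
    (hθ : Tendsto θseq atTop (𝓝 θt)) :
    ∀ φ : ℕ → ℕ, StrictMono φ →
      caraKernel (fun n => {z : ℂ | (θseq (φ n), z) ∈ 𝒰}) = {z : ℂ | (θt, z) ∈ 𝒰} :=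
  fibers_kernel_convergence_general 𝒰 hopen h c hhol hbij hfix hR K hK hKcont θseq θt hθ
end

section
/- Let α ∈ 𝕋^d be rationally independent and F(θ,z) = (θ+α, f_θ(z)) a fibered holomorphic dynamics on 𝕋^d × D_R with f_θ(0) = 0, ρ₁(θ) = ∂_z f_θ(0), and |ρ₁(θ)| < c₀ < 1 for all θ. Define gⁿ_θ(z) = (∏_{i=0}^{n−1} ρ₁(θ+iα))⁻¹ f_θⁿ(z). Then the sequence gⁿ converges uniformly on 𝕋^d × D_r for some r > 0 to a continuous function g, holomorphic in each fiber, satisfying g_θ(0) = 0 and ∂_z g_θ(0) = 1, and moreover g_{θ+α}(f_θ(z)) = ρ₁(θ) g_θ(z); hence F is conjugate near the zero section to the linear dynamics Λ(θ,z) = (θ+α, ρ₁(θ)z). -/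
/-!
On a small tube the fiber maps contract by a factor `c < 1` and differ from their linear parts
`ρ(θ) z` by `O(|z|²)`, uniformly in `θ` (Schwarz lemma on a compact tube); `ρ` is continuous
and, the torus being compact, bounded away from `0`. Hence the normalized iterates change at step
`n` by a relative amount `O(cⁿ |z|)`, so they stay bounded by a multiple of `|z|` and their
increments are `O(cⁿ |z|²)`: they converge geometrically, uniformly on the tube. The limit `g` is
continuous and fiberwise holomorphic as a uniform limit, satisfies `g_θ(z) = z + O(|z|²)`, and
inherits the conjugacy from `gⁿ_{θ+α}(f_θ z) = ρ(θ) gⁿ⁺¹_θ(z)`.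
-/

open Metric Set Filter Topology

/-- The fibered `n`-th iterate `f_θⁿ(z) = f_{θ+(n-1)α}(⋯ f_θ(z) ⋯)`. -/
noncomputable def fiter {d : ℕ} (α : Torus d) (f : Torus d → ℂ → ℂ) :
    ℕ → Torus d → ℂ → ℂ
  | 0 => fun _ z => z
  | n + 1 => fun θ z => f (θ + n • α) (fiter α f n θ z)

section Sequences

variable {E : Type*} [SeminormedAddCommGroup E]

theorem norm_le_exp_sum_mul_norm_zero {a : ℕ → E} {ε : ℕ → ℝ}
    (h : ∀ n, ‖a (n + 1) - a n‖ ≤ ε n * ‖a n‖) (n : ℕ) :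
    ‖a n‖ ≤ Real.exp (∑ k ∈ Finset.range n, ε k) * ‖a 0‖ := by
  induction n with
  | zero => simp
  | succ n ih =>
    calc ‖a (n + 1)‖ ≤ ‖a n‖ + ‖a (n + 1) - a n‖ := norm_le_insert' _ _
      _ ≤ (ε n + 1) * ‖a n‖ := by linarith [h n]
      _ ≤ Real.exp (ε n) * (Real.exp (∑ k ∈ Finset.range n, ε k) * ‖a 0‖) := by
        gcongr
        · exact Real.add_one_le_exp _
      _ = Real.exp (∑ k ∈ Finset.range (n + 1), ε k) * ‖a 0‖ := by
        rw [Finset.sum_range_succ, Real.exp_add]; ring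

/-- Relative increments `K cⁿ` keep the sequence bounded by `exp (K / (1 - c))`, so the absolute
increments are geometric as well. -/
theorem norm_sub_le_geometric_of_norm_sub_le_geometric_mul_norm {a : ℕ → E} {K c : ℝ}
    (hK : 0 ≤ K) (hc₀ : 0 ≤ c) (hc₁ : c < 1)
    (h : ∀ n, ‖a (n + 1) - a n‖ ≤ K * c ^ n * ‖a n‖) (n : ℕ) :
    ‖a (n + 1) - a n‖ ≤ K * Real.exp (K / (1 - c)) * ‖a 0‖ * c ^ n := by
  have hsum : ∑ k ∈ Finset.range n, K * c ^ k ≤ K / (1 - c) := by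
    rw [← Finset.mul_sum, div_eq_mul_one_div, Finset.range_eq_Ico]
    gcongr
    simpa using geom_sum_Ico_le_of_lt_one (m := 0) (n := n) hc₀ hc₁
  calc ‖a (n + 1) - a n‖ ≤ K * c ^ n * ‖a n‖ := h n
    _ ≤ K * c ^ n * (Real.exp (K / (1 - c)) * ‖a 0‖) := by
      gcongr
      exact (norm_le_exp_sum_mul_norm_zero h n).trans (by gcongr)
    _ = K * Real.exp (K / (1 - c)) * ‖a 0‖ * c ^ n := by ring

end Sequences

theorem tendstoUniformlyOn_limUnder_of_dist_le_geometric {X M : Type*} [PseudoMetricSpace M]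
    [CompleteSpace M] [Nonempty M] {G : ℕ → X → M} {s : Set X} {A c : ℝ} (hc₀ : 0 ≤ c) (hc₁ : c < 1)
    (h : ∀ x ∈ s, ∀ n, dist (G n x) (G (n + 1) x) ≤ A * c ^ n) :
    TendstoUniformlyOn G (fun x => limUnder atTop fun n => G n x) atTop s := by
  rw [Metric.tendstoUniformlyOn_iff]
  intro ε hε
  have hbound : Tendsto (fun n : ℕ => A * c ^ n / (1 - c)) atTop (𝓝 0) := by
    simpa using ((tendsto_pow_atTop_nhds_zero_of_lt_one hc₀ hc₁).const_mul A).div_const (1 - c)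
  filter_upwards [hbound.eventually (gt_mem_nhds hε)] with n hn x hx
  have hlim := (cauchySeq_of_le_geometric c A hc₁ (h x hx)).tendsto_limUnder
  rw [dist_comm]
  exact (dist_le_of_le_geometric_of_tendsto c A hc₁ (h x hx) hlim n).trans_lt hn

/-- Two applications of the Schwarz lemma, to `dslope F 0` and then to its own `dslope`, whose
value at `0` is `deriv F 0`. -/
theorem Complex.norm_sub_deriv_mul_le_of_mapsTo_ball {F : ℂ → ℂ} {R K : ℝ}
    (hd : DifferentiableOn ℂ F (ball 0 R)) (h₀ : F 0 = 0)
    (hK : MapsTo F (ball 0 R) (closedBall 0 K)) {z : ℂ} (hz : z ∈ ball 0 R) :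
    ‖F z - deriv F 0 * z‖ ≤ 2 * K / R ^ 2 * ‖z‖ ^ 2 := by
  have hR : 0 < R := pos_of_mem_ball hz
  set F₁ := dslope F 0
  have hF₁d : DifferentiableOn ℂ F₁ (ball 0 R) :=
    (Complex.differentiableOn_dslope (ball_mem_nhds 0 hR)).mpr hd
  have hF₁ : ∀ w ∈ ball (0 : ℂ) R, ‖F₁ w‖ ≤ K / R := fun w hw =>
    Complex.norm_dslope_le_div_of_mapsTo_ball hd (by rwa [h₀]) hw
  have hF₁₀ : F₁ 0 = deriv F 0 := dslope_same F 0
  have hF₂ : ‖dslope F₁ 0 z‖ ≤ 2 * K / R / R := by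
    refine Complex.norm_dslope_le_div_of_mapsTo_ball hF₁d (fun w hw => ?_) hz
    rw [mem_closedBall, dist_eq_norm]
    linarith [norm_sub_le (F₁ w) (F₁ 0), hF₁ w hw, hF₁ 0 (mem_ball_self hR), mul_div_assoc 2 K R]
  have hsplit : F z - deriv F 0 * z = z ^ 2 * dslope F₁ 0 z := by
    have h₁ := sub_smul_dslope F 0 z
    have h₂ := sub_smul_dslope F₁ 0 z
    simp only [sub_zero, smul_eq_mul, h₀, hF₁₀] at h₁ h₂
    rw [← h₁, pow_two, mul_assoc, h₂]
    ring
  rw [hsplit, norm_mul, norm_pow, mul_comm]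
  gcongr
  exact hF₂.trans_eq (by ring)

theorem hasDerivAt_one_of_norm_sub_le_sq {𝕜 : Type*} [NontriviallyNormedField 𝕜] {g : 𝕜 → 𝕜}
    {r K : ℝ} (hr : 0 < r) (h : ∀ z ∈ ball (0 : 𝕜) r, ‖g z - z‖ ≤ K * ‖z‖ ^ 2) :
    HasDerivAt g 1 0 := by
  have hg₀ : g 0 = 0 := by simpa using h 0 (mem_ball_self hr)
  have hbig : (fun z => g z - z) =O[𝓝 0] fun z => ‖z‖ ^ 2 :=
    Asymptotics.isBigO_iff.mpr ⟨K, eventually_of_mem (ball_mem_nhds 0 hr) fun z hz => by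
      simpa using h z hz⟩
  rw [hasDerivAt_iff_isLittleO]
  simpa [hg₀] using hbig.trans_isLittleO (Asymptotics.isLittleO_norm_pow_id one_lt_two)

section Families

variable {Θ : Type*} [TopologicalSpace Θ] {f : Θ → ℂ → ℂ}

theorem exists_norm_sub_deriv_mul_le_sq [CompactSpace Θ] {R : ℝ} (hR : 0 < R)
    (hcont : Continuous fun p : Θ × ℂ => f p.1 p.2)
    (hhol : ∀ θ, DifferentiableOn ℂ (f θ) (ball 0 R)) (hfix : ∀ θ, f θ 0 = 0) :
    ∃ r C : ℝ, 0 < r ∧ r ≤ R ∧ 0 ≤ C ∧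
      ∀ θ, ∀ z ∈ ball (0 : ℂ) r, ‖f θ z - deriv (f θ) 0 * z‖ ≤ C * ‖z‖ ^ 2 := by
  have htube : IsCompact (univ ×ˢ closedBall (0 : ℂ) (R / 2) : Set (Θ × ℂ)) :=
    isCompact_univ.prod (isCompact_closedBall 0 _)
  obtain ⟨K, hK⟩ := htube.exists_bound_of_continuousOn hcont.continuousOn
  refine ⟨R / 2, 2 * max K 0 / (R / 2) ^ 2, by positivity, by linarith, by positivity,
    fun θ z hz => ?_⟩
  refine Complex.norm_sub_deriv_mul_le_of_mapsTo_ball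
    ((hhol θ).mono (ball_subset_ball (by linarith))) (hfix θ) (fun w hw => ?_) hz
  rw [mem_closedBall_zero_iff]
  exact (hK (θ, w) ⟨mem_univ θ, ball_subset_closedBall hw⟩).trans (le_max_left K 0)

/-- `ρ` is the uniform limit of the continuous maps `θ ↦ f θ t / t` as `t → 0`. -/
theorem continuous_of_norm_sub_mul_le_sq {ρ : Θ → ℂ} {r C : ℝ} (hr : 0 < r)
    (hcont : Continuous fun p : Θ × ℂ => f p.1 p.2)
    (hquad : ∀ θ, ∀ z ∈ ball (0 : ℂ) r, ‖f θ z - ρ θ * z‖ ≤ C * ‖z‖ ^ 2) :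
    Continuous ρ := by
  have hunif : TendstoUniformly (fun (t : ℂ) θ => f θ t / t) ρ (𝓝[≠] 0) := by
    rw [Metric.tendstoUniformly_iff]
    intro ε hε
    obtain ⟨s, hs, hCs⟩ := exists_pos_mul_lt hε |C|
    have hsmall : ball (0 : ℂ) (min r s) ∈ 𝓝[≠] 0 :=
      nhdsWithin_le_nhds (ball_mem_nhds 0 (lt_min hr hs))
    filter_upwards [hsmall, self_mem_nhdsWithin] with t ht ht₀ θ
    rw [mem_ball_zero_iff, lt_min_iff] at ht
    have ht₀' : 0 < ‖t‖ := norm_pos_iff.mpr ht₀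
    rw [dist_eq_norm, ← norm_neg, neg_sub, div_sub' ht₀, norm_div, div_lt_iff₀ ht₀', mul_comm t]
    calc ‖f θ t - ρ θ * t‖ ≤ C * ‖t‖ ^ 2 := hquad θ t (mem_ball_zero_iff.mpr ht.1)
      _ ≤ |C| * ‖t‖ * ‖t‖ := by rw [pow_two, ← mul_assoc]; gcongr; exact le_abs_self C
      _ < ε * ‖t‖ := by
        gcongr
        exact (mul_le_mul_of_nonneg_left ht.2.le (abs_nonneg C)).trans_lt hCs
  exact hunif.continuous (Eventually.frequently (Eventually.of_forall fun t =>
    (hcont.comp (continuous_id.prodMk continuous_const)).div_const t))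

end Families

section FiberedIterates

variable {d : ℕ} (α : Torus d) {f : Torus d → ℂ → ℂ}

theorem fiter_succ_apply (n : ℕ) (θ : Torus d) (z : ℂ) :
    fiter α f (n + 1) θ z = fiter α f n (θ + α) (f θ z) := by
  induction n with
  | zero => simp [fiter]
  | succ n ih =>
    simp only [fiter] at ih ⊢
    rw [ih, succ_nsmul, add_comm _ α, add_assoc]

theorem fiter_mapsTo {s : Set ℂ} (hmaps : ∀ θ, MapsTo (f θ) s s) (n : ℕ) (θ : Torus d) :
    MapsTo (fiter α f n θ) s s := by
  induction n with
  | zero => exact mapsTo_id s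
  | succ n ih => exact (hmaps _).comp ih

theorem norm_fiter_le {s : Set ℂ} {c : ℝ} (hc : 0 ≤ c) (hmaps : ∀ θ, MapsTo (f θ) s s)
    (hcontr : ∀ θ, ∀ z ∈ s, ‖f θ z‖ ≤ c * ‖z‖) (n : ℕ) (θ : Torus d) {z : ℂ} (hz : z ∈ s) :
    ‖fiter α f n θ z‖ ≤ c ^ n * ‖z‖ := by
  induction n with
  | zero => simp [fiter]
  | succ n ih =>
    calc ‖fiter α f (n + 1) θ z‖ ≤ c * ‖fiter α f n θ z‖ :=
          hcontr _ _ (fiter_mapsTo α hmaps n θ hz)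
      _ ≤ c ^ (n + 1) * ‖z‖ := by rw [pow_succ', mul_assoc]; gcongr

theorem differentiableOn_fiter {s : Set ℂ} (hhol : ∀ θ, DifferentiableOn ℂ (f θ) s)
    (hmaps : ∀ θ, MapsTo (f θ) s s) (n : ℕ) (θ : Torus d) :
    DifferentiableOn ℂ (fiter α f n θ) s := by
  induction n with
  | zero => exact differentiableOn_id
  | succ n ih => exact (hhol _).comp ih (fiter_mapsTo α hmaps n θ)

theorem continuous_fiter (hcont : Continuous fun p : Torus d × ℂ => f p.1 p.2) (n : ℕ) :
    Continuous fun p : Torus d × ℂ => fiter α f n p.1 p.2 := by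
  induction n with
  | zero => exact continuous_snd
  | succ n ih => exact hcont.comp ((continuous_fst.add continuous_const).prodMk ih)

end FiberedIterates

structure AttractingBounds {Θ : Type*} (f : Θ → ℂ → ℂ) (ρ : Θ → ℂ) (r c C δ : ℝ) : Prop where
  c_nonneg : 0 ≤ c
  c_lt_one : c < 1
  C_nonneg : 0 ≤ C
  δ_pos : 0 < δ
  le_norm : ∀ θ, δ ≤ ‖ρ θ‖
  norm_le : ∀ θ, ∀ z ∈ ball (0 : ℂ) r, ‖f θ z‖ ≤ c * ‖z‖
  norm_sub_mul_le : ∀ θ, ∀ z ∈ ball (0 : ℂ) r, ‖f θ z - ρ θ * z‖ ≤ C * ‖z‖ ^ 2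

namespace AttractingBounds

variable {Θ : Type*} {f : Θ → ℂ → ℂ} {ρ : Θ → ℂ} {r c C δ : ℝ}

theorem mapsTo (hB : AttractingBounds f ρ r c C δ) (θ : Θ) :
    MapsTo (f θ) (ball 0 r) (ball 0 r) := fun z hz => by
  rw [mem_ball_zero_iff] at hz ⊢
  calc ‖f θ z‖ ≤ c * ‖z‖ := hB.norm_le θ z (mem_ball_zero_iff.mpr hz)
    _ ≤ 1 * ‖z‖ := by gcongr; exact hB.c_lt_one.le
    _ < r := by rwa [one_mul]

theorem ne_zero (hB : AttractingBounds f ρ r c C δ) (θ : Θ) : ρ θ ≠ 0 :=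
  norm_pos_iff.mp (hB.δ_pos.trans_le (hB.le_norm θ))

end AttractingBounds

theorem exists_attractingBounds {Θ : Type*} [Nonempty Θ] {f : Θ → ℂ → ℂ} {ρ : Θ → ℂ}
    {r₀ c₀ c C δ : ℝ} (hr₀ : 0 < r₀) (hC : 0 ≤ C)
    (hquad : ∀ θ, ∀ z ∈ ball (0 : ℂ) r₀, ‖f θ z - ρ θ * z‖ ≤ C * ‖z‖ ^ 2)
    (hρ : ∀ θ, ‖ρ θ‖ ≤ c₀) (hc₀ : c₀ < c) (hc : c < 1) (hδ : 0 < δ) (hρδ : ∀ θ, δ ≤ ‖ρ θ‖) :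
    ∃ r, 0 < r ∧ r ≤ r₀ ∧ AttractingBounds f ρ r c C δ := by
  obtain ⟨s, hs, hCs⟩ := exists_pos_mul_lt (sub_pos.mpr hc₀) C
  have hquad' : ∀ θ, ∀ z ∈ ball (0 : ℂ) (min r₀ s), ‖f θ z - ρ θ * z‖ ≤ C * ‖z‖ ^ 2 :=
    fun θ z hz => hquad θ z (ball_subset_ball (min_le_left r₀ s) hz)
  refine ⟨min r₀ s, lt_min hr₀ hs, min_le_left r₀ s,
    ⟨(norm_nonneg _).trans ((hρ (Classical.arbitrary Θ)).trans hc₀.le), hc, hC, hδ, hρδ,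
      fun θ z hz => ?_, hquad'⟩⟩
  have hzs : ‖z‖ ≤ s := (mem_ball_zero_iff.mp hz).le.trans (min_le_right r₀ s)
  calc ‖f θ z‖ ≤ ‖ρ θ * z‖ + ‖f θ z - ρ θ * z‖ := norm_le_insert' _ _
    _ ≤ c₀ * ‖z‖ + C * s * ‖z‖ := by
      rw [norm_mul]
      gcongr
      · exact hρ θ
      · calc ‖f θ z - ρ θ * z‖ ≤ C * ‖z‖ ^ 2 := hquad' θ z hz
          _ = C * ‖z‖ * ‖z‖ := by ring
          _ ≤ C * s * ‖z‖ := by gcongr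
    _ ≤ c * ‖z‖ := by nlinarith [norm_nonneg z]

section NormalizedIterates

variable {d : ℕ} (α : Torus d) (f : Torus d → ℂ → ℂ) (ρ : Torus d → ℂ)

noncomputable def orbitProd (n : ℕ) (θ : Torus d) : ℂ :=
  ∏ i ∈ Finset.range n, ρ (θ + i • α)

noncomputable def normalizedIterate (n : ℕ) (θ : Torus d) (z : ℂ) : ℂ :=
  (orbitProd α ρ n θ)⁻¹ * fiter α f n θ z

noncomputable def koenigsMap (θ : Torus d) (z : ℂ) : ℂ :=
  limUnder atTop fun n => normalizedIterate α f ρ n θ z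

variable {α f ρ}

theorem orbitProd_succ' (n : ℕ) (θ : Torus d) :
    orbitProd α ρ (n + 1) θ = ρ θ * orbitProd α ρ n (θ + α) := by
  rw [orbitProd, orbitProd, Finset.prod_range_succ', zero_smul, add_zero, mul_comm]
  refine congrArg _ (Finset.prod_congr rfl fun i _ => ?_)
  rw [succ_nsmul, add_comm _ α, add_assoc]

theorem orbitProd_ne_zero (hρ : ∀ θ, ρ θ ≠ 0) (n : ℕ) (θ : Torus d) : orbitProd α ρ n θ ≠ 0 :=
  Finset.prod_ne_zero_iff.mpr fun _ _ => hρ _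

theorem normalizedIterate_zero (θ : Torus d) (z : ℂ) : normalizedIterate α f ρ 0 θ z = z := by
  simp [normalizedIterate, orbitProd, fiter]

theorem normalizedIterate_succ_sub {n : ℕ} {θ : Torus d} (hρ : ρ (θ + n • α) ≠ 0) (z : ℂ) :
    normalizedIterate α f ρ (n + 1) θ z - normalizedIterate α f ρ n θ z =
      (ρ (θ + n • α))⁻¹ * ((orbitProd α ρ n θ)⁻¹ *
        (f (θ + n • α) (fiter α f n θ z) - ρ (θ + n • α) * fiter α f n θ z)) := by
  simp only [normalizedIterate, orbitProd, Finset.prod_range_succ, fiter, mul_inv]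
  field_simp

theorem normalizedIterate_apply_map {θ : Torus d} (hρ : ρ θ ≠ 0) (n : ℕ) (z : ℂ) :
    normalizedIterate α f ρ n (θ + α) (f θ z) = ρ θ * normalizedIterate α f ρ (n + 1) θ z := by
  rw [normalizedIterate, normalizedIterate, orbitProd_succ', fiter_succ_apply, mul_inv,
    ← mul_assoc, ← mul_assoc, mul_inv_cancel₀ hρ, one_mul]

theorem continuous_normalizedIterate (hcont : Continuous fun p : Torus d × ℂ => f p.1 p.2)
    (hρc : Continuous ρ) (hρ : ∀ θ, ρ θ ≠ 0) (n : ℕ) :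
    Continuous fun p : Torus d × ℂ => normalizedIterate α f ρ n p.1 p.2 := by
  have hprod : Continuous fun p : Torus d × ℂ => orbitProd α ρ n p.1 :=
    continuous_finsetProd _ fun i _ => hρc.comp (continuous_fst.add continuous_const)
  exact (hprod.inv₀ fun p => orbitProd_ne_zero hρ n p.1).mul (continuous_fiter α hcont n)

theorem differentiableOn_normalizedIterate {s : Set ℂ}
    (hhol : ∀ θ, DifferentiableOn ℂ (f θ) s) (hmaps : ∀ θ, MapsTo (f θ) s s) (n : ℕ)
    (θ : Torus d) : DifferentiableOn ℂ (normalizedIterate α f ρ n θ) s :=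
  (differentiableOn_fiter α hhol hmaps n θ).const_mul _

end NormalizedIterates

namespace AttractingBounds

variable {d : ℕ} (α : Torus d) {f : Torus d → ℂ → ℂ} {ρ : Torus d → ℂ} {r c C δ : ℝ}

theorem norm_normalizedIterate_succ_sub_le (hB : AttractingBounds f ρ r c C δ) (θ : Torus d)
    {z : ℂ} (hz : z ∈ ball 0 r) (n : ℕ) :
    ‖normalizedIterate α f ρ (n + 1) θ z - normalizedIterate α f ρ n θ z‖ ≤
      C / δ * ‖z‖ * c ^ n * ‖normalizedIterate α f ρ n θ z‖ := by
  have hδ := hB.δ_pos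
  have hC := hB.C_nonneg
  set w := fiter α f n θ z
  have hw : w ∈ ball 0 r := fiter_mapsTo α hB.mapsTo n θ hz
  have hwz : ‖w‖ ≤ c ^ n * ‖z‖ := norm_fiter_le α hB.c_nonneg hB.mapsTo hB.norm_le n θ hz
  have hGn : ‖normalizedIterate α f ρ n θ z‖ = ‖orbitProd α ρ n θ‖⁻¹ * ‖w‖ := by
    rw [normalizedIterate, norm_mul, norm_inv]
  rw [normalizedIterate_succ_sub (hB.ne_zero _), norm_mul, norm_mul, norm_inv, norm_inv, hGn]
  calc ‖ρ (θ + n • α)‖⁻¹ * (‖orbitProd α ρ n θ‖⁻¹ * ‖f (θ + n • α) w - ρ (θ + n • α) * w‖)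
      ≤ δ⁻¹ * (‖orbitProd α ρ n θ‖⁻¹ * (C * ‖w‖ ^ 2)) := by
        gcongr
        · exact hB.le_norm _
        · exact hB.norm_sub_mul_le _ w hw
    _ = C / δ * ‖w‖ * (‖orbitProd α ρ n θ‖⁻¹ * ‖w‖) := by ring
    _ ≤ C / δ * (c ^ n * ‖z‖) * (‖orbitProd α ρ n θ‖⁻¹ * ‖w‖) := by gcongr
    _ = C / δ * ‖z‖ * c ^ n * (‖orbitProd α ρ n θ‖⁻¹ * ‖w‖) := by ring

theorem exists_dist_normalizedIterate_le_geometric (hB : AttractingBounds f ρ r c C δ) :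
    ∃ M, 0 ≤ M ∧ ∀ θ, ∀ z ∈ ball (0 : ℂ) r, ∀ n,
      dist (normalizedIterate α f ρ n θ z) (normalizedIterate α f ρ (n + 1) θ z) ≤
        M * ‖z‖ ^ 2 * c ^ n := by
  have hδ := hB.δ_pos
  have hC := hB.C_nonneg
  have hc := sub_pos.mpr hB.c_lt_one
  refine ⟨C / δ * Real.exp (C / δ * r / (1 - c)), by positivity, fun θ z hz n => ?_⟩
  have hzr : ‖z‖ ≤ r := (mem_ball_zero_iff.mp hz).le
  have hgeom := norm_sub_le_geometric_of_norm_sub_le_geometric_mul_norm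
    (a := fun n => normalizedIterate α f ρ n θ z) (K := C / δ * ‖z‖) (by positivity)
    hB.c_nonneg hB.c_lt_one (hB.norm_normalizedIterate_succ_sub_le α θ hz) n
  rw [normalizedIterate_zero] at hgeom
  rw [dist_comm, dist_eq_norm]
  calc _ ≤ C / δ * ‖z‖ * Real.exp (C / δ * ‖z‖ / (1 - c)) * ‖z‖ * c ^ n := hgeom
    _ = C / δ * Real.exp (C / δ * ‖z‖ / (1 - c)) * ‖z‖ ^ 2 * c ^ n := by ring
    _ ≤ C / δ * Real.exp (C / δ * r / (1 - c)) * ‖z‖ ^ 2 * c ^ n := by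
      have := hB.c_nonneg
      gcongr

theorem tendstoUniformlyOn_normalizedIterate (hB : AttractingBounds f ρ r c C δ) :
    TendstoUniformlyOn (fun n (p : Torus d × ℂ) => normalizedIterate α f ρ n p.1 p.2)
      (fun p => koenigsMap α f ρ p.1 p.2) atTop (univ ×ˢ ball 0 r) := by
  obtain ⟨M, hM₀, hM⟩ := hB.exists_dist_normalizedIterate_le_geometric α
  refine tendstoUniformlyOn_limUnder_of_dist_le_geometric (A := M * r ^ 2) hB.c_nonneg
    hB.c_lt_one fun p hp n => (hM p.1 p.2 hp.2 n).trans ?_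
  have hpr : ‖p.2‖ ≤ r := (mem_ball_zero_iff.mp hp.2).le
  have := hB.c_nonneg
  gcongr

theorem tendsto_normalizedIterate (hB : AttractingBounds f ρ r c C δ) (θ : Torus d) {z : ℂ}
    (hz : z ∈ ball 0 r) :
    Tendsto (fun n => normalizedIterate α f ρ n θ z) atTop (𝓝 (koenigsMap α f ρ θ z)) :=
  (hB.tendstoUniformlyOn_normalizedIterate α).tendsto_at (x := (θ, z)) ⟨mem_univ θ, hz⟩

theorem exists_norm_koenigsMap_sub_le (hB : AttractingBounds f ρ r c C δ) :
    ∃ K, ∀ θ, ∀ z ∈ ball (0 : ℂ) r, ‖koenigsMap α f ρ θ z - z‖ ≤ K * ‖z‖ ^ 2 := by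
  obtain ⟨M, -, hM⟩ := hB.exists_dist_normalizedIterate_le_geometric α
  refine ⟨M / (1 - c), fun θ z hz => ?_⟩
  have h := dist_le_of_le_geometric_of_tendsto c (M * ‖z‖ ^ 2) hB.c_lt_one (hM θ z hz)
    (hB.tendsto_normalizedIterate α θ hz) 0
  rw [normalizedIterate_zero, dist_comm, dist_eq_norm, pow_zero, mul_one] at h
  exact h.trans_eq (by ring)

theorem hasDerivAt_koenigsMap (hB : AttractingBounds f ρ r c C δ) (hr : 0 < r) (θ : Torus d) :
    HasDerivAt (koenigsMap α f ρ θ) 1 0 := by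
  obtain ⟨K, hK⟩ := hB.exists_norm_koenigsMap_sub_le α
  exact hasDerivAt_one_of_norm_sub_le_sq hr (hK θ)

theorem koenigsMap_zero (hB : AttractingBounds f ρ r c C δ) (hr : 0 < r) (θ : Torus d) :
    koenigsMap α f ρ θ 0 = 0 := by
  obtain ⟨K, hK⟩ := hB.exists_norm_koenigsMap_sub_le α
  simpa using hK θ 0 (mem_ball_self hr)

theorem koenigsMap_apply_map (hB : AttractingBounds f ρ r c C δ) (θ : Torus d) {z : ℂ}
    (hz : z ∈ ball 0 r) : koenigsMap α f ρ (θ + α) (f θ z) = ρ θ * koenigsMap α f ρ θ z := by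
  refine tendsto_nhds_unique (hB.tendsto_normalizedIterate α (θ + α) (hB.mapsTo θ hz)) ?_
  simp_rw [normalizedIterate_apply_map (hB.ne_zero θ)]
  exact ((hB.tendsto_normalizedIterate α θ hz).comp (tendsto_add_atTop_nat 1)).const_mul (ρ θ)

theorem continuousOn_koenigsMap (hB : AttractingBounds f ρ r c C δ)
    (hcont : Continuous fun p : Torus d × ℂ => f p.1 p.2) (hρ : Continuous ρ) :
    ContinuousOn (fun p : Torus d × ℂ => koenigsMap α f ρ p.1 p.2) (univ ×ˢ ball 0 r) :=
  (hB.tendstoUniformlyOn_normalizedIterate α).continuousOn <| Frequently.of_forall fun n =>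
    (continuous_normalizedIterate hcont hρ hB.ne_zero n).continuousOn

theorem differentiableOn_koenigsMap (hB : AttractingBounds f ρ r c C δ)
    (hhol : ∀ θ, DifferentiableOn ℂ (f θ) (ball 0 r)) (θ : Torus d) :
    DifferentiableOn ℂ (koenigsMap α f ρ θ) (ball 0 r) := by
  have hfiber : TendstoUniformlyOn (fun n => normalizedIterate α f ρ n θ) (koenigsMap α f ρ θ)
      atTop (ball 0 r) :=
    ((hB.tendstoUniformlyOn_normalizedIterate α).comp fun z => (θ, z)).mono
      fun z hz => ⟨mem_univ θ, hz⟩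
  exact hfiber.tendstoLocallyUniformlyOn.differentiableOn
    (Eventually.of_forall fun n => differentiableOn_normalizedIterate hhol hB.mapsTo n θ)
    isOpen_ball

end AttractingBounds

theorem fibered_koenigs_linearization_general {d : ℕ} (α : Torus d)
    (R c₀ : ℝ) (hR : 0 < R) (hc₀ : c₀ < 1)
    (f : Torus d → ℂ → ℂ)
    (hcont : Continuous (fun p : Torus d × ℂ => f p.1 p.2))
    (hhol : ∀ θ : Torus d, DifferentiableOn ℂ (f θ) (ball (0:ℂ) R))
    (hfix : ∀ θ : Torus d, f θ 0 = 0)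
    (hder0 : ∀ θ : Torus d, deriv (f θ) 0 ≠ 0)
    (hder : ∀ θ : Torus d, ‖deriv (f θ) 0‖ < c₀) :
    ∃ r : ℝ, 0 < r ∧ r ≤ R ∧ ∃ g : Torus d → ℂ → ℂ,
      ContinuousOn (fun p : Torus d × ℂ => g p.1 p.2)
        (Set.univ ×ˢ ball (0:ℂ) r) ∧
      (∀ θ : Torus d, DifferentiableOn ℂ (g θ) (ball (0:ℂ) r)) ∧
      (∀ θ : Torus d, g θ 0 = 0) ∧
      (∀ θ : Torus d, deriv (g θ) 0 = 1) ∧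
      TendstoUniformlyOn
        (fun n (p : Torus d × ℂ) =>
          (∏ i ∈ Finset.range n, deriv (f (p.1 + i • α)) 0)⁻¹ * fiter α f n p.1 p.2)
        (fun p => g p.1 p.2) atTop (Set.univ ×ˢ ball (0:ℂ) r) ∧
      ∀ θ : Torus d, ∀ z ∈ ball (0:ℂ) r,
        g (θ + α) (f θ z) = deriv (f θ) 0 * g θ z := by
  obtain ⟨r₀, C, hr₀, hr₀R, hC, hquad⟩ := exists_norm_sub_deriv_mul_le_sq hR hcont hhol hfix
  have hρ : Continuous fun θ => deriv (f θ) 0 := continuous_of_norm_sub_mul_le_sq hr₀ hcont hquad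
  obtain ⟨θmin, -, hθmin⟩ := isCompact_univ.exists_isMinOn univ_nonempty hρ.norm.continuousOn
  obtain ⟨r, hr, hrr₀, hB⟩ := exists_attractingBounds (c := (c₀ + 1) / 2) hr₀ hC hquad
    (fun θ => (hder θ).le) (by linarith) (by linarith) (norm_pos_iff.mpr (hder0 θmin))
    (fun θ => hθmin (mem_univ θ))
  have hhol_r : ∀ θ, DifferentiableOn ℂ (f θ) (ball 0 r) :=
    fun θ => (hhol θ).mono (ball_subset_ball (hrr₀.trans hr₀R))
  exact ⟨r, hr, hrr₀.trans hr₀R, koenigsMap α f fun θ => deriv (f θ) 0,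
    hB.continuousOn_koenigsMap α hcont hρ, hB.differentiableOn_koenigsMap α hhol_r,
    hB.koenigsMap_zero α hr, fun θ => (hB.hasDerivAt_koenigsMap α hr θ).deriv,
    hB.tendstoUniformlyOn_normalizedIterate α, fun θ z hz => hB.koenigsMap_apply_map α θ hz⟩

/-- **Fibered Koenigs linearization of an attracting invariant curve.**
With `ρ₁(θ) = ∂_z f_θ(0)` satisfying `|ρ₁| < c₀ < 1`, the normalized iterates
`gⁿ_θ(z) = (∏_{i<n} ρ₁(θ+iα))⁻¹ f_θⁿ(z)` converge uniformly on a tube to a fiberwise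
holomorphic `g` with `g_θ(0) = 0`, `∂_z g_θ(0) = 1` and `g_{θ+α}(f_θ(z)) = ρ₁(θ) g_θ(z)`,
so `F` is conjugate near the zero section to `Λ(θ,z) = (θ+α, ρ₁(θ)z)`. -/
theorem fibered_koenigs_linearization {d : ℕ} (α : Torus d) (hα : RatIndep α)
    (R c₀ : ℝ) (hR : 0 < R) (hc₀ : c₀ < 1)
    (f : Torus d → ℂ → ℂ)
    (hcont : Continuous (fun p : Torus d × ℂ => f p.1 p.2))
    (hhol : ∀ θ : Torus d, DifferentiableOn ℂ (f θ) (ball (0:ℂ) R))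
    (hinj : ∀ θ : Torus d, Set.InjOn (f θ) (ball (0:ℂ) R))
    (hfix : ∀ θ : Torus d, f θ 0 = 0)
    (hder0 : ∀ θ : Torus d, deriv (f θ) 0 ≠ 0)
    (hder : ∀ θ : Torus d, ‖deriv (f θ) 0‖ < c₀) :
    ∃ r : ℝ, 0 < r ∧ r ≤ R ∧ ∃ g : Torus d → ℂ → ℂ,
      ContinuousOn (fun p : Torus d × ℂ => g p.1 p.2)
        (Set.univ ×ˢ ball (0:ℂ) r) ∧
      (∀ θ : Torus d, DifferentiableOn ℂ (g θ) (ball (0:ℂ) r)) ∧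
      (∀ θ : Torus d, g θ 0 = 0) ∧
      (∀ θ : Torus d, deriv (g θ) 0 = 1) ∧
      TendstoUniformlyOn
        (fun n (p : Torus d × ℂ) =>
          (∏ i ∈ Finset.range n, deriv (f (p.1 + i • α)) 0)⁻¹ * fiter α f n p.1 p.2)
        (fun p => g p.1 p.2) atTop (Set.univ ×ˢ ball (0:ℂ) r) ∧
      ∀ θ : Torus d, ∀ z ∈ ball (0:ℂ) r,
        g (θ + α) (f θ z) = deriv (f θ) 0 * g θ z :=
  fibered_koenigs_linearization_general α R c₀ hR hc₀ f hcont hhol hfix hder0 hder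
end
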